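/- arXiv:1905.04542 — 5 statements merged into one kernel-verified Lean document; each statement's English description precedes it below -/
import Mathlib

section
/- For all u, v ∈ X there exists ε > 0 (depending on u and v) such that for all g, h ∈ G: if gu ≠ hv then ‖gu − hv‖ > ε. -/
private lemma key_aux {X : Type*} [NormedAddCommGroup X] [NormedSpace ℝ X]
    {G : Type*} [Group G] (ρ : G →* (X ≃ₗᵢ[ℝ] X))
    (hdisc : ∀ u : X, u ≠ 0 → ∃ ε > 0, ∀ g : G, ρ g u ≠ u → ε ≤ ‖ρ g u - u‖)
    (u v : X) :
    ∃ ε > 0, ∀ k : G, ρ k u ≠ v → ε < ‖ρ k u - v‖ := by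
  have hcomp : ∀ (a b : G) (x : X), ρ (a * b) x = ρ a (ρ b x) := by
    intro a b x; rw [map_mul]; rfl
  have hnorm : ∀ (a : G) (x y : X), ‖ρ a x - ρ a y‖ = ‖x - y‖ := by
    intro a x y
    rw [← map_sub]
    exact (ρ a).norm_map _
  by_cases hu : u = 0
  · subst hu
    by_cases hv : v = 0
    · refine ⟨1, one_pos, fun k hk => ?_⟩
      exact absurd (by simp [hv]) hk
    · have hvpos : (0:ℝ) < ‖v‖ := norm_pos_iff.mpr hv
      refine ⟨‖v‖ / 2, by linarith, fun k hk => ?_⟩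
      have : ρ k (0 : X) = 0 := by simp
      rw [this, zero_sub, norm_neg]
      linarith
  · obtain ⟨ε₀, hε₀, hdisc'⟩ := hdisc u hu
    by_cases hc : ∃ k₀ : G, ρ k₀ u ≠ v ∧ ‖ρ k₀ u - v‖ < ε₀ / 2
    · obtain ⟨k₀, hk₀ne, hk₀⟩ := hc
      have hd : (0:ℝ) < ‖ρ k₀ u - v‖ := norm_pos_iff.mpr (sub_ne_zero_of_ne hk₀ne)
      refine ⟨min ‖ρ k₀ u - v‖ (ε₀ / 2) / 2, by positivity, fun k hk => ?_⟩
      by_cases heq : ρ k u = ρ k₀ u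
      · rw [heq]
        calc min ‖ρ k₀ u - v‖ (ε₀ / 2) / 2 ≤ ‖ρ k₀ u - v‖ / 2 :=
              by gcongr; exact min_le_left _ _
          _ < ‖ρ k₀ u - v‖ := by linarith
      · have h1 : ρ (k₀⁻¹ * k) u ≠ u := by
          intro h
          apply heq
          have := congrArg (ρ k₀) h
          rwa [← hcomp, mul_inv_cancel_left] at this
        have h2 : ε₀ ≤ ‖ρ k u - ρ k₀ u‖ := by
          have hle := hdisc' _ h1
          have e : ‖ρ (k₀⁻¹ * k) u - u‖ = ‖ρ k u - ρ k₀ u‖ := by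
            have hx : ρ k₀ (ρ (k₀⁻¹ * k) u) = ρ k u := by
              rw [← hcomp, mul_inv_cancel_left]
            calc ‖ρ (k₀⁻¹ * k) u - u‖ = ‖ρ k₀ (ρ (k₀⁻¹ * k) u) - ρ k₀ u‖ := (hnorm _ _ _).symm
              _ = ‖ρ k u - ρ k₀ u‖ := by rw [hx]
          linarith [e ▸ hle]
        have h3 : ‖ρ k u - ρ k₀ u‖ ≤ ‖ρ k u - v‖ + ‖v - ρ k₀ u‖ :=
          norm_sub_le_norm_sub_add_norm_sub _ _ _
        have h4 : ‖v - ρ k₀ u‖ = ‖ρ k₀ u - v‖ := norm_sub_rev _ _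
        have h5 : min ‖ρ k₀ u - v‖ (ε₀ / 2) / 2 ≤ ε₀ / 4 := by
          have := min_le_right ‖ρ k₀ u - v‖ (ε₀ / 2)
          linarith
        linarith
    · push_neg at hc
      refine ⟨ε₀ / 4, by positivity, fun k hk => ?_⟩
      have := hc k hk
      linarith

/-- Lemma 2.2: if a group `G` acts on a normed real vector space by linear isometries and
the action is discrete, then for all `u, v ∈ X` there is `ε > 0` such that
`‖gu − hv‖ > ε` whenever `gu ≠ hv`. -/
theorem statement2 {X : Type*} [NormedAddCommGroup X] [NormedSpace ℝ X]
    (G : Type*) [Group G] (ρ : G →* (X ≃ₗᵢ[ℝ] X))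
    (hdisc : ∀ u : X, u ≠ 0 → ∃ ε > 0, ∀ g : G, ρ g u ≠ u → ε ≤ ‖ρ g u - u‖)
    (u v : X) :
    ∃ ε > 0, ∀ g h : G, ρ g u ≠ ρ h v → ε < ‖ρ g u - ρ h v‖ := by
  have hcomp : ∀ (a b : G) (x : X), ρ (a * b) x = ρ a (ρ b x) := by
    intro a b x; rw [map_mul]; rfl
  obtain ⟨ε, hε, hkey⟩ := key_aux ρ hdisc u v
  refine ⟨ε, hε, fun g h hne => ?_⟩
  have hmul : ρ (h⁻¹ * g) u = ρ h⁻¹ (ρ g u) := hcomp _ _ _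
  have h1 : ρ (h⁻¹ * g) u ≠ v := by
    rw [hmul]
    intro hcontra
    apply hne
    have := congrArg (ρ h) hcontra
    rwa [← hcomp, mul_inv_cancel, MonoidHom.map_one, LinearIsometryEquiv.coe_one, id_eq] at this
  have h2 := hkey _ h1
  have e : ‖ρ (h⁻¹ * g) u - v‖ = ‖ρ g u - ρ h v‖ := by
    rw [hmul]
    have hv : ρ h⁻¹ (ρ h v) = v := by
      rw [← hcomp, inv_mul_cancel, MonoidHom.map_one, LinearIsometryEquiv.coe_one, id_eq]
    calc ‖ρ h⁻¹ (ρ g u) - v‖ = ‖ρ h⁻¹ (ρ g u) - ρ h⁻¹ (ρ h v)‖ := by rw [hv]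
      _ = ‖ρ g u - ρ h v‖ := by rw [← map_sub]; exact (ρ h⁻¹).norm_map _
  linarith [e ▸ h2]
end

section
/- Assume conditions (I1)–(I7). Let Q_k be a finite-dimensional vector subspace of Q. Then 𝒥̃(u) → −∞ as ‖u‖ → ∞ with u ∈ Q_k; that is, for every sequence (uₙ) ⊂ Q_k with ‖uₙ‖ → ∞ one has 𝒥̃(uₙ) → −∞. -/
open Topology Filter Set

noncomputable section

variable {X : Type*} [NormedAddCommGroup X] [NormedSpace ℝ X]

/-- Weak convergence of a sequence: `f (u n) → f w` for every continuous linear functional. -/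
def WConv (u : ℕ → X) (w : X) : Prop :=
  ∀ f : X →L[ℝ] ℝ, Tendsto (fun n => f (u n)) atTop (𝓝 (f w))

/-- The setting: `X` is a reflexive Banach space with a topological direct sum decomposition
`X = X⁺ ⊕ X⁻` into closed subspaces, `X⁺` is a Hilbert space (its norm satisfies the
parallelogram law), `‖u‖² = ‖u⁺‖² + ‖u⁻‖²`, and `I : X → ℝ` is of class `C¹`. -/
structure Setting (X : Type*) [NormedAddCommGroup X] [NormedSpace ℝ X] where
  complete : CompleteSpace X
  reflexive : Function.Surjective (NormedSpace.inclusionInDoubleDual ℝ X)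
  Xp : Submodule ℝ X
  Xm : Submodule ℝ X
  Xp_closed : IsClosed (Xp : Set X)
  Xm_closed : IsClosed (Xm : Set X)
  compl : IsCompl Xp Xm
  P : X →ₗ[ℝ] X
  Pm : X →ₗ[ℝ] X
  P_mem : ∀ u, P u ∈ Xp
  Pm_mem : ∀ u, Pm u ∈ Xm
  P_add_Pm : ∀ u, P u + Pm u = u
  P_cont : Continuous P
  Pm_cont : Continuous Pm
  norm_sq : ∀ u : X, ‖u‖ ^ 2 = ‖P u‖ ^ 2 + ‖Pm u‖ ^ 2
  parallelogram : ∀ u ∈ Xp, ∀ v ∈ Xp,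
    ‖u + v‖ ^ 2 + ‖u - v‖ ^ 2 = 2 * ‖u‖ ^ 2 + 2 * ‖v‖ ^ 2
  I : X → ℝ
  I_C1 : ContDiff ℝ 1 I

namespace Setting

variable (S : Setting X)

/-- The functional `J(u) = ½‖u⁺‖² − I(u)`. -/
def J : X → ℝ := fun u => (1 / 2) * ‖S.P u‖ ^ 2 - S.I u

/-- `M = {u ∈ X : I'(u)v = 0 for all v ∈ X⁻}`. -/
def M : Set X := {u | ∀ v ∈ S.Xm, fderiv ℝ S.I u v = 0}

/-- The Nehari–Pankov set `N = {u ∈ X \ X⁻ : J'(u)u = 0 and J'(u)v = 0 for all v ∈ X⁻}`. -/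
def N : Set X :=
  {u | u ∉ S.Xm ∧ fderiv ℝ S.J u u = 0 ∧ ∀ v ∈ S.Xm, fderiv ℝ S.J u v = 0}

/-- `T`-convergence: `uₙ⁺ → u⁺` in norm and `uₙ⁻ ⇀ u⁻` weakly. -/
def TConv (u : ℕ → X) (w : X) : Prop :=
  Tendsto (fun n => S.P (u n)) atTop (𝓝 (S.P w)) ∧ WConv (fun n => S.Pm (u n)) (S.Pm w)

/-- (I1): `I(u) ≥ I(0) = 0`. -/
def I1 : Prop := S.I 0 = 0 ∧ ∀ u, 0 ≤ S.I u

/-- (I2): `I` is sequentially `T`-lower semicontinuous. -/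
def I2 : Prop := ∀ (u : ℕ → X) (w : X), S.TConv u w →
  S.I w ≤ atTop.liminf fun n => S.I (u n)

/-- (I3): if `uₙ →_T u` and `I(uₙ) → I(u)` then `uₙ → u` in norm. -/
def I3 : Prop := ∀ (u : ℕ → X) (w : X), S.TConv u w →
  Tendsto (fun n => S.I (u n)) atTop (𝓝 (S.I w)) → Tendsto u atTop (𝓝 w)

/-- (I4): `‖uₙ⁺‖ + I(uₙ) → ∞` whenever `‖uₙ‖ → ∞`. -/
def I4 : Prop := ∀ u : ℕ → X, Tendsto (fun n => ‖u n‖) atTop atTop →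
  Tendsto (fun n => ‖S.P (u n)‖ + S.I (u n)) atTop atTop

/-- (I5): if `u ∈ M` then `I(u) < I(u + v)` for every `v ∈ X⁻ \ {0}`. -/
def I5 : Prop := ∀ u ∈ S.M, ∀ v ∈ S.Xm, v ≠ 0 → S.I u < S.I (u + v)

/-- `m : X⁺ → M` assigns to each `w ∈ X⁺` the point `m(w) ∈ M ∩ (w + X⁻)` which is the
unique maximizer of `J` on `w + X⁻`. -/
def IsMaxMap (m : X → X) : Prop :=
  ∀ w ∈ S.Xp, m w ∈ S.M ∧ m w - w ∈ S.Xm ∧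
    ∀ z ∈ S.Xm, w + z ≠ m w → S.J (w + z) < S.J (m w)

/-- The reduced functional `𝒥̃ = J ∘ m` on `X⁺`. -/
def Jt (m : X → X) : ↥S.Xp → ℝ := fun w => S.J (m (w : X))

/-- (I6): with radius `r` the infimum `a` of `J` on the sphere of radius `r` in `X⁺`
is positive. -/
def I6 (r a : ℝ) : Prop :=
  0 < r ∧ a = sInf (S.J '' {u : X | u ∈ S.Xp ∧ ‖u‖ = r}) ∧ 0 < a

/-- (I7): `Q` is an infinite-dimensional closed subspace of `X⁺` such that
`I(m(tₙuₙ))/tₙ² → ∞` whenever `tₙ → ∞`, `uₙ ∈ Q` and `uₙ → u ≠ 0`. -/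
def I7 (m : X → X) (Q : Submodule ℝ X) : Prop :=
  Q ≤ S.Xp ∧ IsClosed (Q : Set X) ∧ ¬ FiniteDimensional ℝ Q ∧
    ∀ (t : ℕ → ℝ) (u : ℕ → X) (w : X), Tendsto t atTop atTop → (∀ n, u n ∈ Q) →
      Tendsto u atTop (𝓝 w) → w ≠ 0 →
      Tendsto (fun n => S.I (m (t n • u n)) / (t n) ^ 2) atTop atTop

/-- (I8): `((t²−1)/2)·I'(u)u + t·I'(u)v + I(u) − I(tu+v) ≤ 0` for `u ∈ N`, `t ≥ 0`,
`v ∈ X⁻`. -/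
def I8 : Prop :=
  ∀ u ∈ S.N, ∀ t : ℝ, 0 ≤ t → ∀ v ∈ S.Xm,
    ((t ^ 2 - 1) / 2) * fderiv ℝ S.I u u + t * fderiv ℝ S.I u v
      + S.I u - S.I (t • u + v) ≤ 0

end Setting

lemma aux_P_eq_self {X : Type*} [NormedAddCommGroup X] [NormedSpace ℝ X]
    (S : Setting X) {x : X} (hx : x ∈ S.Xp) : S.P x = x := by
  have h := S.P_add_Pm x
  have h1 : S.Pm x ∈ S.Xp := by
    have hx' : S.Pm x = x - S.P x := eq_sub_of_add_eq' h
    rw [hx']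
    exact S.Xp.sub_mem hx (S.P_mem x)
  have h2 : S.Pm x = 0 :=
    Submodule.disjoint_def.mp S.compl.disjoint (S.Pm x) h1 (S.Pm_mem x)
  rw [h2, add_zero] at h
  exact h

lemma aux_P_eq_zero {X : Type*} [NormedAddCommGroup X] [NormedSpace ℝ X]
    (S : Setting X) {x : X} (hx : x ∈ S.Xm) : S.P x = 0 := by
  have h := S.P_add_Pm x
  have h1 : S.P x ∈ S.Xm := by
    have hx' : S.P x = x - S.Pm x := eq_sub_of_add_eq h
    rw [hx']
    exact S.Xm.sub_mem hx (S.Pm_mem x)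
  exact Submodule.disjoint_def.mp S.compl.disjoint (S.P x) (S.P_mem x) h1

lemma aux_P_m {X : Type*} [NormedAddCommGroup X] [NormedSpace ℝ X]
    (S : Setting X) (m : X → X) (hm : S.IsMaxMap m) {w : X} (hw : w ∈ S.Xp) :
    S.P (m w) = w := by
  obtain ⟨-, hsub, -⟩ := hm w hw
  have heq : m w = w + (m w - w) := by abel
  rw [heq, map_add, aux_P_eq_self S hw, aux_P_eq_zero S hsub, add_zero]

/-- Lemma 2.4: under (I1)–(I7), if `Q_k` is a finite-dimensional subspace of `Q`, then
`𝒥̃(uₙ) → −∞` for every sequence `(uₙ) ⊆ Q_k` with `‖uₙ‖ → ∞`. -/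
theorem statement3
    {X : Type*} [NormedAddCommGroup X] [NormedSpace ℝ X]
    (S : Setting X)
    (hI1 : S.I1) (hI2 : S.I2) (hI3 : S.I3) (hI4 : S.I4) (hI5 : S.I5)
    (m : X → X) (hm : S.IsMaxMap m)
    (r a : ℝ) (hI6 : S.I6 r a) (Q : Submodule ℝ X) (hI7 : S.I7 m Q)
    (Qk : Submodule ℝ X) (hQk : Qk ≤ Q) (hfin : FiniteDimensional ℝ Qk) :
    ∀ u : ℕ → X, (∀ n, u n ∈ Qk) → Tendsto (fun n => ‖u n‖) atTop atTop →
      Tendsto (fun n => S.J (m (u n))) atTop atBot := by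
  intro u hu hnorm
  obtain ⟨hQXp, -, -, hI7'⟩ := hI7
  by_contra hcon
  rw [tendsto_atBot] at hcon
  push_neg at hcon
  obtain ⟨b, hb⟩ := hcon
  have hfreq : ∃ᶠ n in atTop, b < S.J (m (u n)) ∧ 1 ≤ ‖u n‖ := by
    apply hb.and_eventually (hnorm.eventually_ge_atTop 1)
    |>.mono
    intro n ⟨h1, h2⟩
    exact ⟨h1, h2⟩
  obtain ⟨φ, hφmono, hφ⟩ := Filter.extraction_of_frequently_atTop hfreq
  -- normalized sequence in Qk
  haveI := hfin
  set v : ℕ → Qk := fun n => ⟨‖u (φ n)‖⁻¹ • u (φ n), Qk.smul_mem _ (hu (φ n))⟩ with hv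
  have hnz : ∀ n, ‖u (φ n)‖ ≠ 0 := fun n =>
    ne_of_gt (lt_of_lt_of_le one_pos (hφ n).2)
  have hvnorm : ∀ n, ‖v n‖ = 1 := by
    intro n
    show ‖‖u (φ n)‖⁻¹ • u (φ n)‖ = 1
    rw [norm_smul, norm_inv, norm_norm, inv_mul_cancel₀ (hnz n)]
  have hvmem : ∀ n, v n ∈ Metric.sphere (0 : Qk) 1 := by
    intro n
    rw [mem_sphere_zero_iff_norm]
    exact hvnorm n
  obtain ⟨wt, hwt, ψ, hψmono, hψconv⟩ :=
    (isCompact_sphere (0 : Qk) 1).tendsto_subseq hvmem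
  have hwnorm : ‖(wt : X)‖ = 1 := by
    rw [mem_sphere_zero_iff_norm] at hwt
    exact hwt
  have hwne : (wt : X) ≠ 0 := by
    intro h
    rw [h, norm_zero] at hwnorm
    exact one_ne_zero hwnorm.symm
  -- apply I7
  have htT : Tendsto (fun k => ‖u (φ (ψ k))‖) atTop atTop :=
    (hnorm.comp hφmono.tendsto_atTop).comp hψmono.tendsto_atTop
  have hucQ : ∀ k, ((v (ψ k) : X)) ∈ Q := fun k => hQk (v (ψ k)).2
  have huconv : Tendsto (fun k => ((v (ψ k) : X))) atTop (𝓝 (wt : X)) :=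
    (continuous_subtype_val.tendsto wt).comp hψconv
  have htend := hI7' (fun k => ‖u (φ (ψ k))‖) (fun k => (v (ψ k) : X)) (wt : X)
    htT hucQ huconv hwne
  have hrw : ∀ k, ‖u (φ (ψ k))‖ • ((v (ψ k) : X)) = u (φ (ψ k)) := by
    intro k
    show ‖u (φ (ψ k))‖ • (‖u (φ (ψ k))‖⁻¹ • u (φ (ψ k))) = u (φ (ψ k))
    rw [smul_inv_smul₀ (hnz (ψ k))]
  have htend' : Tendsto (fun k => S.I (m (u (φ (ψ k)))) / ‖u (φ (ψ k))‖ ^ 2)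
      atTop atTop := by
    convert htend using 2 with k
    rw [hrw k]
  -- derive contradiction
  have hev1 : ∀ᶠ k in atTop, 1 ≤ S.I (m (u (φ (ψ k)))) / ‖u (φ (ψ k))‖ ^ 2 :=
    htend'.eventually_ge_atTop 1
  have hev2 : ∀ᶠ k in atTop, 1 + 2 * |b| ≤ ‖u (φ (ψ k))‖ :=
    htT.eventually_ge_atTop (1 + 2 * |b|)
  obtain ⟨k, hk1, hk2⟩ := (hev1.and hev2).exists
  have hbk : b < S.J (m (u (φ (ψ k)))) := (hφ (ψ k)).1
  set s := ‖u (φ (ψ k))‖ with hs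
  have hs1 : (1 : ℝ) ≤ s := (hφ (ψ k)).2
  have hspos : 0 < s ^ 2 := by positivity
  have hI : s ^ 2 ≤ S.I (m (u (φ (ψ k)))) := by
    rw [le_div_iff₀ hspos] at hk1
    linarith [hk1]
  have hJeq : S.J (m (u (φ (ψ k)))) = (1 / 2) * s ^ 2 - S.I (m (u (φ (ψ k)))) := by
    unfold Setting.J
    rw [aux_P_m S m hm (hQXp (hQk (hu (φ (ψ k)))))]
  rw [hJeq] at hbk
  have habs1 : -|b| ≤ b := neg_abs_le b
  nlinarith [sq_nonneg s, abs_nonneg b]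
end
end

section
/- Assume conditions (I1)–(I5). Then for each w ∈ X⁺ there exists a unique v ∈ X⁻ such that w + v ∈ M; moreover w + v is the unique minimizer of I on the affine subspace w + X⁻ (equivalently, the unique maximizer of J on w + X⁻). -/
open Topology Filter Set

noncomputable section

variable {X : Type*} [NormedAddCommGroup X] [NormedSpace ℝ X]

section Aux

open TopologicalSpace NormedSpace

variable {E : Type*} [NormedAddCommGroup E] [NormedSpace ℝ E]



/-- A continuous functional vanishing on a closed submodule but not at a point outside it. -/
lemma exists_dual_vanishing (N : Submodule ℝ E) (hN : IsClosed (N : Set E)) {x : E}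
    (hx : x ∉ N) : ∃ f : E →L[ℝ] ℝ, (∀ y ∈ N, f y = 0) ∧ f x ≠ 0 := by
  obtain ⟨f, u, hfu, hux⟩ := geometric_hahn_banach_closed_point N.convex hN hx
  have h0 : (0:ℝ) < u := by simpa using hfu 0 N.zero_mem
  refine ⟨f, fun y hy => ?_, (h0.trans hux).ne'⟩
  by_contra hfy
  have h1 : f ((u / f y) • y) < u := hfu _ (N.smul_mem _ hy)
  rw [map_smul, smul_eq_mul, div_mul_cancel₀ u hfy] at h1
  exact lt_irrefl _ h1

/-- If the dual of a real normed space is separable, so is the space. -/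
lemma separable_of_dual_separable [SeparableSpace (E →L[ℝ] ℝ)] :
    SeparableSpace E := by
  classical
  set ψ : ℕ → (E →L[ℝ] ℝ) := denseSeq (E →L[ℝ] ℝ) with hψdef
  have hψ : DenseRange ψ := denseRange_denseSeq _
  have hz : ∀ n, ∃ z : E, ‖z‖ ≤ 1 ∧ ‖ψ n‖ / 2 ≤ ‖ψ n z‖ := by
    intro n
    rcases eq_or_ne (ψ n) 0 with h | h
    · exact ⟨0, by simp, by simp [h]⟩
    · have hpos : (0:ℝ) < ‖ψ n‖ := norm_pos_iff.mpr h
      obtain ⟨z, hz1, hz2⟩ := (ψ n).exists_lt_apply_of_lt_opNorm (half_lt_self hpos)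
      exact ⟨z, hz1.le, hz2.le⟩
  choose z hz1 hz2 using hz
  set V : Submodule ℝ E := (Submodule.span ℝ (Set.range z)).topologicalClosure with hVdef
  have hVsep : IsSeparable (V : Set E) := by
    rw [hVdef, Submodule.topologicalClosure_coe]
    exact ((Set.countable_range z).isSeparable.span).closure
  have hV : ∀ x : E, x ∈ V := by
    intro x
    by_contra hxV
    obtain ⟨φ, hφV, hφx⟩ := exists_dual_vanishing V (by rw [hVdef]; exact Submodule.isClosed_topologicalClosure _) hxV
    have hφ0 : φ ≠ 0 := fun h => hφx (by simp [h])
    have hφn : ‖φ‖ ≠ 0 := norm_ne_zero_iff.mpr hφ0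
    set φ' : E →L[ℝ] ℝ := ‖φ‖⁻¹ • φ with hφ'def
    have hφ'norm : ‖φ'‖ = 1 := by
      have h := norm_smul (‖φ‖⁻¹) φ
      rw [hφ'def, h, norm_inv, norm_norm, inv_mul_cancel₀ hφn]
    obtain ⟨n, hn⟩ := Metric.denseRange_iff.mp hψ φ' (1/4) (by norm_num)
    rw [dist_eq_norm] at hn
    have hzV : z n ∈ V := Submodule.le_topologicalClosure _
      (Submodule.subset_span (Set.mem_range_self n))
    have hφ'z : φ' (z n) = 0 := by
      rw [hφ'def]; simp [hφV _ hzV]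
    have hnn : ‖ψ n‖ ≥ 3/4 := by
      have h1 : ‖φ'‖ - ‖ψ n‖ ≤ ‖φ' - ψ n‖ := norm_sub_norm_le _ _
      rw [hφ'norm] at h1; linarith
    have h2 : ‖ψ n (z n)‖ ≤ 1/4 := by
      have : ψ n (z n) = (ψ n - φ') (z n) := by
        simp [ContinuousLinearMap.sub_apply, hφ'z]
      rw [this]
      calc ‖(ψ n - φ') (z n)‖ ≤ ‖ψ n - φ'‖ * ‖z n‖ := (ψ n - φ').le_opNorm _
        _ ≤ (1/4) * 1 := by
            apply mul_le_mul _ (hz1 n) (norm_nonneg _) (by norm_num)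
            rw [← norm_neg]; simpa [neg_sub] using hn.le
        _ = 1/4 := by ring
    have h3 := hz2 n
    linarith
  have : IsSeparable (univ : Set E) := hVsep.mono fun x _ => hV x
  exact isSeparable_univ_iff.mp this

lemma subspace_reflexive (hrefl : Function.Surjective (inclusionInDoubleDual ℝ E))
    (Y : Submodule ℝ E) (hYc : IsClosed (Y : Set E)) :
    Function.Surjective (inclusionInDoubleDual ℝ ↥Y) := by
  intro ψ
  set ρ : StrongDual ℝ E →L[ℝ] StrongDual ℝ ↥Y := (ContinuousLinearMap.compL ℝ ↥Y E ℝ).flip Y.subtypeL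
    with hρdef
  obtain ⟨x, hx⟩ := hrefl (ψ.comp ρ)
  have hx' : ∀ f : StrongDual ℝ E, f x = ψ (f.comp Y.subtypeL) := by
    intro f
    have h1 : inclusionInDoubleDual ℝ E x f = (ψ.comp ρ) f := by rw [hx]
    rw [dual_def] at h1
    simpa [hρdef] using h1
  have hxY : x ∈ Y := by
    by_contra hxY
    obtain ⟨f, hf0, hfx⟩ := exists_dual_vanishing Y hYc hxY
    have hz : f.comp Y.subtypeL = 0 := by
      ext y; exact hf0 y y.2
    have := hx' f
    rw [hz] at this
    simp at this
    exact hfx this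
  refine ⟨⟨x, hxY⟩, ?_⟩
  ext g
  obtain ⟨f, hf, -⟩ := exists_extension_norm_eq Y g
  have hfg : f.comp Y.subtypeL = g := by ext y; exact hf y
  rw [dual_def]
  calc g ⟨x, hxY⟩ = f x := (hf ⟨x, hxY⟩).symm
    _ = ψ (f.comp Y.subtypeL) := hx' f
    _ = ψ g := by rw [hfg]

/-- Bounded sequences in a reflexive space have weakly convergent subsequences. -/
theorem exists_weak_subseq (hrefl : Function.Surjective (inclusionInDoubleDual ℝ E))
    (v : ℕ → E) {R : ℝ} (hb : ∀ n, ‖v n‖ ≤ R) :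
    ∃ (x : E) (φ : ℕ → ℕ), StrictMono φ ∧
      ∀ f : E →L[ℝ] ℝ, Tendsto (fun m => f (v (φ m))) atTop (𝓝 (f x)) := by
  classical
  have hR0 : (0:ℝ) ≤ R := le_trans (norm_nonneg _) (hb 0)
  set Y : Submodule ℝ E := (Submodule.span ℝ (Set.range v)).topologicalClosure with hYdef
  have hYc : IsClosed (Y : Set E) := by
    rw [hYdef]; exact Submodule.isClosed_topologicalClosure _
  have hvY : ∀ n, v n ∈ Y := fun n =>
    Submodule.le_topologicalClosure _ (Submodule.subset_span (Set.mem_range_self n))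
  haveI hYsep : SeparableSpace ↥Y := by
    have h1 : IsSeparable (Y : Set E) := by
      rw [hYdef, Submodule.topologicalClosure_coe]
      exact ((Set.countable_range v).isSeparable.span).closure
    exact h1.separableSpace
  have hYrefl : Function.Surjective (inclusionInDoubleDual ℝ ↥Y) :=
    subspace_reflexive hrefl Y hYc
  haveI hdd : SeparableSpace (StrongDual ℝ (StrongDual ℝ ↥Y)) :=
    hYrefl.denseRange.separableSpace (inclusionInDoubleDual ℝ ↥Y).continuous
  haveI hdsep : SeparableSpace (↥Y →L[ℝ] ℝ) := separable_of_dual_separable (E := StrongDual ℝ ↥Y)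
  -- dense sequence of functionals on Y, extended to E
  set g : ℕ → StrongDual ℝ ↥Y := denseSeq (StrongDual ℝ ↥Y) with hgdef
  have hg : DenseRange g := denseRange_denseSeq _
  choose F hF hFn using fun k => exists_extension_norm_eq Y (g k)
  -- diagonal extraction
  set s : ℕ → (ℕ → ℝ) := fun n k => F k (v n) with hsdef
  set K : Set (ℕ → ℝ) := Set.univ.pi fun k => Set.Icc (-(‖F k‖ * R)) (‖F k‖ * R) with hKdef
  have hKc : IsCompact K := isCompact_univ_pi fun k => isCompact_Icc
  have hmem : ∀ n, s n ∈ K := by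
    intro n
    rw [hKdef, Set.mem_univ_pi]
    intro k
    have h1 : |F k (v n)| ≤ ‖F k‖ * R :=
      le_trans ((F k).le_opNorm _) (mul_le_mul_of_nonneg_left (hb n) (norm_nonneg _))
    exact ⟨neg_le_of_abs_le h1, le_of_abs_le h1⟩
  obtain ⟨L, -, φ, hφ, hLt⟩ := hKc.isSeqCompact hmem
  have hpt : ∀ k, Tendsto (fun m => F k (v (φ m))) atTop (𝓝 (L k)) := by
    intro k
    exact (tendsto_pi_nhds.mp hLt k)
  -- convergence for every functional
  have key : ∀ f : StrongDual ℝ E, ∃ l : ℝ, Tendsto (fun m => f (v (φ m))) atTop (𝓝 l) := by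
    intro f
    have hC : CauchySeq (fun m => f (v (φ m))) := by
      rw [Metric.cauchySeq_iff]
      intro ε hε
      set fY : StrongDual ℝ ↥Y := f.comp Y.subtypeL with hfYdef
      obtain ⟨k, hk⟩ := Metric.denseRange_iff.mp hg fY (ε / (4 * (R + 1))) (by positivity)
      replace hk : ‖fY - g k‖ < ε / (4 * (R + 1)) := lt_of_eq_of_lt (dist_eq_norm fY (g k)).symm hk
      have hclose : ∀ n, |f (v n) - F k (v n)| ≤ ε / 4 := by
        intro n
        have he : f (v n) - F k (v n) = (fY - g k) ⟨v n, hvY n⟩ := by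
          rw [ContinuousLinearMap.sub_apply, hfYdef]
          rw [hF k ⟨v n, hvY n⟩]
          rfl
        rw [he]
        calc |(fY - g k) ⟨v n, hvY n⟩| ≤ ‖fY - g k‖ * ‖(⟨v n, hvY n⟩ : ↥Y)‖ :=
              (fY - g k).le_opNorm _
          _ ≤ (ε / (4 * (R + 1))) * R := by
              apply mul_le_mul hk.le _ (norm_nonneg _) (by positivity)
              simpa using hb n
          _ ≤ ε / 4 := by
              rw [div_mul_eq_mul_div, div_le_div_iff₀ (by positivity) (by norm_num)]
              nlinarith
      obtain ⟨N, hN⟩ := Metric.cauchySeq_iff.mp (hpt k).cauchySeq (ε / 4) (by positivity)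
      refine ⟨N, fun m hm m' hm' => ?_⟩
      have d1 := hclose (φ m)
      have d2 := hclose (φ m')
      have d3 := hN m hm m' hm'
      rw [Real.dist_eq] at d3 ⊢
      have : f (v (φ m)) - f (v (φ m')) =
          (f (v (φ m)) - F k (v (φ m))) + (F k (v (φ m)) - F k (v (φ m')))
            + (F k (v (φ m')) - f (v (φ m'))) := by ring
      rw [this]
      calc |_ + _ + _| ≤ |f (v (φ m)) - F k (v (φ m))| + |F k (v (φ m)) - F k (v (φ m'))|
            + |F k (v (φ m')) - f (v (φ m'))| := by
              exact le_trans (abs_add_le _ _) (by gcongr; exact abs_add_le _ _)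
        _ < ε := by
            rw [abs_sub_comm (F k (v (φ m'))) (f (v (φ m')))] at *
            linarith [d1, d2, d3]
    exact cauchySeq_tendsto_of_complete hC
  choose l hl using key
  -- the limit functional
  have hadd : ∀ f₁ f₂ : StrongDual ℝ E, l (f₁ + f₂) = l f₁ + l f₂ := by
    intro f₁ f₂
    refine tendsto_nhds_unique ?_ ((hl f₁).add (hl f₂))
    simpa [ContinuousLinearMap.add_apply] using hl (f₁ + f₂)
  have hsmul : ∀ (c : ℝ) (f : StrongDual ℝ E), l (c • f) = c * l f := by
    intro c f
    refine tendsto_nhds_unique ?_ ((hl f).const_mul c)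
    simpa [ContinuousLinearMap.smul_apply, smul_eq_mul] using hl (c • f)
  have hbound : ∀ f : StrongDual ℝ E, |l f| ≤ R * ‖f‖ := by
    intro f
    have h1 : Tendsto (fun m => |f (v (φ m))|) atTop (𝓝 |l f|) := (hl f).abs
    refine le_of_tendsto h1 (Eventually.of_forall fun m => ?_)
    calc |f (v (φ m))| ≤ ‖f‖ * ‖v (φ m)‖ := f.le_opNorm _
      _ ≤ ‖f‖ * R := mul_le_mul_of_nonneg_left (hb _) (norm_nonneg _)
      _ = R * ‖f‖ := mul_comm _ _
  set Φ : StrongDual ℝ (StrongDual ℝ E) := LinearMap.mkContinuous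
    { toFun := l
      map_add' := hadd
      map_smul' := hsmul } R (fun f => by
        simpa [Real.norm_eq_abs] using hbound f) with hΦdef
  obtain ⟨x, hx⟩ := hrefl Φ
  refine ⟨x, φ, hφ, fun f => ?_⟩
  have h1 : f x = l f := by
    have h2 : inclusionInDoubleDual ℝ E x f = Φ f := by rw [hx]
    rw [dual_def] at h2
    exact h2
  rw [h1]
  exact hl f

lemma bdd_or_subseq (a : ℕ → ℝ) :
    (∃ R, ∀ n, a n ≤ R) ∨ ∃ φ : ℕ → ℕ, StrictMono φ ∧
      Tendsto (fun k => a (φ k)) atTop atTop := by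
  by_cases h : ∀ k : ℕ, ∃ᶠ n in atTop, (k : ℝ) < a n
  · right
    obtain ⟨φ, hφ, hP⟩ := Filter.extraction_forall_of_frequently h
    exact ⟨φ, hφ, tendsto_atTop_mono (fun k => (hP k).le) tendsto_natCast_atTop_atTop⟩
  · left
    push_neg at h
    obtain ⟨k, hk⟩ := h
    rw [Filter.eventually_atTop] at hk
    obtain ⟨N, hN⟩ := hk
    refine ⟨max (k : ℝ) ((Finset.range (N + 1)).sup' (by simp) fun n => a n), fun n => ?_⟩
    rcases le_or_gt N n with h | h
    · exact le_max_of_le_left (hN n h)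
    · exact le_max_of_le_right (Finset.le_sup' _ (Finset.mem_range.mpr (by omega)))

end Aux

/-- Under (I1)–(I5): for each `w ∈ X⁺` there is a unique `v ∈ X⁻` with `w + v ∈ M`;
moreover `w + v` is the unique minimizer of `I` (equivalently, the unique maximizer of
`J`) on `w + X⁻`. -/
theorem statement4
    {X : Type*} [NormedAddCommGroup X] [NormedSpace ℝ X]
    (S : Setting X)
    (hI1 : S.I1) (hI2 : S.I2) (hI3 : S.I3) (hI4 : S.I4) (hI5 : S.I5) :
    ∀ w ∈ S.Xp, ∃ v ∈ S.Xm, w + v ∈ S.M ∧ (∀ z ∈ S.Xm, w + z ∈ S.M → z = v) ∧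
      ∀ z ∈ S.Xm, z ≠ v → S.I (w + v) < S.I (w + z) ∧ S.J (w + z) < S.J (w + v) := by
  intro w hw
  classical
  -- projection identities on the affine slice
  have hproj : ∀ z ∈ S.Xm, S.P (w + z) = w ∧ S.Pm (w + z) = z := by
    intro z hz
    have h1 : S.P (w + z) - w ∈ S.Xp := S.Xp.sub_mem (S.P_mem _) hw
    have heq : S.P (w + z) - w = z - S.Pm (w + z) := by
      have h := S.P_add_Pm (w + z)
      rw [sub_eq_sub_iff_add_eq_add, h]
      abel
    have h2 : S.P (w + z) - w ∈ S.Xm := heq ▸ S.Xm.sub_mem hz (S.Pm_mem _)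
    have h0 : S.P (w + z) - w = 0 := Submodule.disjoint_def.mp S.compl.disjoint _ h1 h2
    have hP : S.P (w + z) = w := by rwa [sub_eq_zero] at h0
    refine ⟨hP, ?_⟩
    have h := S.P_add_Pm (w + z)
    rw [hP] at h
    exact add_left_cancel h
  -- the infimum of I on the slice
  set A : Set ℝ := (fun z => S.I (w + z)) '' (S.Xm : Set X) with hA
  have hAne : A.Nonempty := ⟨S.I (w + 0), ⟨0, S.Xm.zero_mem, rfl⟩⟩
  have hAbdd : BddBelow A := by
    refine ⟨0, fun a ha => ?_⟩
    obtain ⟨z, hz, rfl⟩ := ha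
    exact hI1.2 _
  set c : ℝ := sInf A with hc
  have hcle : ∀ z ∈ S.Xm, c ≤ S.I (w + z) := fun z hz => csInf_le hAbdd ⟨z, hz, rfl⟩
  -- a minimizing sequence
  have hseq : ∀ n : ℕ, ∃ z ∈ S.Xm, S.I (w + z) < c + 1 / (n + 1) := by
    intro n
    obtain ⟨a, ha, halt⟩ := Real.lt_sInf_add_pos hAne
      (show (0:ℝ) < 1 / (n + 1) by positivity)
    obtain ⟨z, hz, rfl⟩ := ha
    exact ⟨z, hz, halt⟩
  choose u hu1 hu2 using hseq
  have htend : Tendsto (fun n => S.I (w + u n)) atTop (𝓝 c) := by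
    have h1 : Tendsto (fun n : ℕ => c + 1 / ((n : ℝ) + 1)) atTop (𝓝 c) := by
      simpa using tendsto_const_nhds.add (tendsto_one_div_add_atTop_nhds_zero_nat (𝕜 := ℝ))
    exact tendsto_of_tendsto_of_tendsto_of_le_of_le tendsto_const_nhds h1
      (fun n => hcle _ (hu1 n)) (fun n => (hu2 n).le)
  -- the minimizing sequence is bounded
  have hbdd : ∃ R, ∀ n, ‖u n‖ ≤ R := by
    rcases bdd_or_subseq (fun n => ‖w + u n‖) with ⟨R, hR⟩ | ⟨φ, hφ, hT⟩
    · exact ⟨R + ‖w‖, fun n => by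
        have : ‖u n‖ ≤ ‖w + u n‖ + ‖w‖ := by
          have := norm_sub_le (w + u n) w
          simpa [add_sub_cancel_left] using this
        linarith [hR n]⟩
    · exfalso
      have h4 := hI4 (fun k => w + u (φ k)) hT
      have heq : (fun k => ‖S.P (w + u (φ k))‖ + S.I (w + u (φ k)))
          = fun k => ‖w‖ + S.I (w + u (φ k)) := by
        funext k
        rw [(hproj _ (hu1 _)).1]
      rw [heq] at h4
      have h5 : Tendsto (fun k => ‖w‖ + S.I (w + u (φ k))) atTop (𝓝 (‖w‖ + c)) :=
        tendsto_const_nhds.add (htend.comp hφ.tendsto_atTop)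
      exact not_tendsto_atTop_of_tendsto_nhds h5 h4
  obtain ⟨R, hR⟩ := hbdd
  -- weakly convergent subsequence
  obtain ⟨x, φ, hφ, hconv⟩ := exists_weak_subseq S.reflexive u hR
  -- the weak limit is in Xm
  have hxXm : x ∈ S.Xm := by
    by_contra hx
    obtain ⟨f, hf0, hfx⟩ := exists_dual_vanishing S.Xm S.Xm_closed hx
    have h1 : Tendsto (fun m => f (u (φ m))) atTop (𝓝 (f x)) := hconv f
    have h2 : (fun m => f (u (φ m))) = fun _ => (0:ℝ) := by
      funext m; exact hf0 _ (hu1 _)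
    rw [h2] at h1
    exact hfx (tendsto_nhds_unique tendsto_const_nhds h1).symm
  -- T-convergence of the subsequence to w + x
  have hTconv : S.TConv (fun m => w + u (φ m)) (w + x) := by
    constructor
    · have heq : (fun m => S.P (w + u (φ m))) = fun _ => w := by
        funext m; exact (hproj _ (hu1 _)).1
      rw [heq, (hproj _ hxXm).1]
      exact tendsto_const_nhds
    · intro f
      have heq : (fun m => f (S.Pm (w + u (φ m)))) = fun m => f (u (φ m)) := by
        funext m; rw [(hproj _ (hu1 _)).2]
      rw [heq, (hproj _ hxXm).2]
      exact hconv f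
  -- I attains its minimum c at w + x
  have hmin : S.I (w + x) = c := by
    have h1 := hI2 _ _ hTconv
    have h2 : atTop.liminf (fun m => S.I (w + u (φ m))) = c :=
      (htend.comp hφ.tendsto_atTop).liminf_eq
    rw [h2] at h1
    exact le_antisymm h1 (hcle _ hxXm)
  have hminle : ∀ z ∈ S.Xm, S.I (w + x) ≤ S.I (w + z) := by
    intro z hz
    rw [hmin]; exact hcle z hz
  -- w + x is in M
  have hM : w + x ∈ S.M := by
    intro z hz
    have hI' : HasFDerivAt S.I (fderiv ℝ S.I (w + x)) (w + x) :=
      (S.I_C1.differentiable one_ne_zero (w + x)).hasFDerivAt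
    have hcurve : HasDerivAt (fun t : ℝ => w + x + t • z) z 0 := by
      have h1 : HasDerivAt (fun t : ℝ => t • z) ((1:ℝ) • z) 0 :=
        (hasDerivAt_id (0:ℝ)).smul_const z
      have h2 := h1.const_add (w + x)
      simpa using h2
    have hcomp : HasDerivAt (fun t : ℝ => S.I (w + x + t • z)) (fderiv ℝ S.I (w + x) z) 0 := by
      have h3 : HasFDerivAt S.I (fderiv ℝ S.I (w + x)) (w + x + (0:ℝ) • z) := by
        simpa using hI'
      exact h3.comp_hasDerivAt 0 hcurve
    have hloc : IsLocalMin (fun t : ℝ => S.I (w + x + t • z)) 0 := by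
      refine Filter.Eventually.of_forall fun t => ?_
      have h1 : x + t • z ∈ S.Xm := S.Xm.add_mem hxXm (S.Xm.smul_mem _ hz)
      have h2 := hminle _ h1
      simpa [add_assoc] using h2
    exact hloc.hasDerivAt_eq_zero hcomp
  -- strict minimality from I5
  have hstrict : ∀ z ∈ S.Xm, z ≠ x → S.I (w + x) < S.I (w + z) := by
    intro z hz hne
    have h1 : z - x ∈ S.Xm := S.Xm.sub_mem hz hxXm
    have h2 : z - x ≠ 0 := sub_ne_zero.mpr hne
    have h3 := hI5 _ hM _ h1 h2
    simpa [add_assoc, add_sub_cancel] using h3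
  refine ⟨x, hxXm, hM, ?_, ?_⟩
  · -- uniqueness in M
    intro z hz hzM
    by_contra hne
    have h1 := hstrict z hz hne
    have h2 : x - z ∈ S.Xm := S.Xm.sub_mem hxXm hz
    have h3 : x - z ≠ 0 := sub_ne_zero.mpr fun h => hne (by rw [h])
    have h4 := hI5 _ hzM _ h2 h3
    have h5 : w + z + (x - z) = w + x := by abel
    rw [h5] at h4
    exact lt_asymm h1 h4
  · -- strict inequalities
    intro z hz hne
    refine ⟨hstrict z hz hne, ?_⟩
    have hJz : S.J (w + z) = 1 / 2 * ‖w‖ ^ 2 - S.I (w + z) := by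
      unfold Setting.J
      rw [(hproj _ hz).1]
    have hJx : S.J (w + x) = 1 / 2 * ‖w‖ ^ 2 - S.I (w + x) := by
      unfold Setting.J
      rw [(hproj _ hxXm).1]
    rw [hJz, hJx]
    have := hstrict z hz hne
    linarith
end
end

section
/- Assume conditions (I1)–(I5). Then the map m : X⁺ → M is a homeomorphism (M carrying the norm topology of X) whose inverse is the map M ∋ u ↦ u⁺ ∈ X⁺. -/
open Topology Filter Set

noncomputable section

variable {X : Type*} [NormedAddCommGroup X] [NormedSpace ℝ X]

section AuxLemmas

variable {E : Type*} [NormedAddCommGroup E] [NormedSpace ℝ E]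

/-- Separation of a point from a closed submodule by a continuous linear functional. -/
lemma aux_separation (U : Submodule ℝ E) (hU : IsClosed (U : Set E)) {x : E} (hx : x ∉ U) :
    ∃ f : E →L[ℝ] ℝ, (∀ u ∈ U, f u = 0) ∧ f x = 1 := by
  obtain ⟨f, c, hfs, hcx⟩ := geometric_hahn_banach_closed_point (U.convex) hU hx
  have hf0 : ∀ u ∈ U, f u = 0 := by
    intro u hu
    by_contra h0
    have hmem : ((c + 1) / f u) • u ∈ U := U.smul_mem _ hu
    have := hfs _ hmem
    rw [map_smul] at this
    simp only [smul_eq_mul] at this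
    rw [div_mul_cancel₀ _ h0] at this
    linarith
  have h0c : (0 : ℝ) < c := by
    have h00 := hfs 0 U.zero_mem
    simpa using h00
  have hfx : f x ≠ 0 := ne_of_gt (lt_trans h0c hcx)
  refine ⟨(f x)⁻¹ • f, ?_, ?_⟩
  · intro u hu
    simp [hf0 u hu]
  · simp [inv_mul_cancel₀ hfx]

/-- An unbounded-above real sequence has a subsequence tending to infinity. -/
lemma aux_unbounded (a : ℕ → ℝ) (h : ¬ ∃ C, ∀ n, a n ≤ C) :
    ∃ φ : ℕ → ℕ, StrictMono φ ∧ Tendsto (fun n => a (φ n)) atTop atTop := by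
  push_neg at h
  have hfreq : ∀ k : ℕ, ∃ᶠ n in atTop, a n > (k : ℝ) := by
    intro k
    rw [frequently_atTop]
    intro N
    obtain ⟨B, hB⟩ := (Set.finite_range fun i : Fin N => a i).bddAbove
    obtain ⟨n, hn⟩ := h (max (k : ℝ) B)
    refine ⟨n, ?_, lt_of_le_of_lt (le_max_left _ _) hn⟩
    by_contra hnN
    push_neg at hnN
    exact absurd (le_trans (hB ⟨⟨n, hnN⟩, rfl⟩) (le_max_right _ _)) (not_le.mpr hn)
  obtain ⟨φ, hφ, hP⟩ := Filter.extraction_forall_of_frequently hfreq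
  exact ⟨φ, hφ, tendsto_atTop_mono (fun k => le_of_lt (hP k))
    tendsto_natCast_atTop_atTop⟩

end AuxLemmas

section WeakBW
variable {E : Type*} [NormedAddCommGroup E] [NormedSpace ℝ E]

/-- Weak sequential Bolzano–Weierstrass theorem in a reflexive Banach space. -/
lemma weak_bw (hrefl : Function.Surjective (NormedSpace.inclusionInDoubleDual ℝ E))
    (v : ℕ → E) (C : ℝ) (hv : ∀ n, ‖v n‖ ≤ C) :
    ∃ φ : ℕ → ℕ, StrictMono φ ∧ ∃ x : E,
      ∀ f : E →L[ℝ] ℝ, Tendsto (fun n => f (v (φ n))) atTop (𝓝 (f x)) := by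
  have hC : 0 ≤ C := le_trans (norm_nonneg _) (hv 0)
  -- the separable closed subspace generated by the sequence
  set Y : Submodule ℝ E := (Submodule.span ℝ (Set.range v)).topologicalClosure with hY
  have hYc : IsClosed (Y : Set E) := Submodule.isClosed_topologicalClosure _
  have hvY : ∀ n, v n ∈ Y :=
    fun n => Submodule.le_topologicalClosure _ (Submodule.subset_span ⟨n, rfl⟩)
  have hsep : TopologicalSpace.IsSeparable (Y : Set E) := by
    rw [hY, Submodule.topologicalClosure_coe]
    exact ((Set.countable_range v).isSeparable.span).closure
  obtain ⟨c, hc_count, hc_dense⟩ := hsep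
  obtain ⟨e, he⟩ := (hc_count.insert 0).exists_eq_range (Set.insert_nonempty 0 c)
  have hYe : (Y : Set E) ⊆ closure (Set.range e) := by
    rw [← he]
    exact hc_dense.trans (closure_mono (Set.subset_insert _ _))
  -- norming functionals
  have hgex : ∀ i : ℕ, ∃ g : E →L[ℝ] ℝ, ‖g‖ ≤ 1 ∧ g (e i) = ‖e i‖ := by
    intro i
    obtain ⟨g, hg1, hg2⟩ := exists_dual_vector'' ℝ (e i)
    exact ⟨g, hg1, by simpa using hg2⟩
  choose g hg1 hg2 using hgex
  -- the annihilator of Y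
  set W : Submodule ℝ (E →L[ℝ] ℝ) :=
    { carrier := {f | ∀ z ∈ Y, f z = 0}
      add_mem' := fun hf hg z hz => by simp [hf z hz, hg z hz]
      zero_mem' := fun z hz => rfl
      smul_mem' := fun r f hf z hz => by simp [hf z hz] } with hW
  have hWmem : ∀ f : E →L[ℝ] ℝ, f ∈ W ↔ ∀ z ∈ Y, f z = 0 := fun f => Iff.rfl
  set D : Submodule ℝ (E →L[ℝ] ℝ) := Submodule.span ℝ (Set.range g) ⊔ W with hD
  -- main claim: D is dense in the dual
  have hdense : ∀ f : E →L[ℝ] ℝ, f ∈ D.topologicalClosure := by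
    by_contra hcon
    push_neg at hcon
    obtain ⟨f, hf⟩ := hcon
    obtain ⟨Ξ, hΞ0, hΞf⟩ := aux_separation D.topologicalClosure
      (Submodule.isClosed_topologicalClosure _) hf
    obtain ⟨x, hx⟩ := hrefl Ξ
    have hxapply : ∀ h : E →L[ℝ] ℝ, h x = Ξ h := by
      intro h
      have := ContinuousLinearMap.ext_iff.mp hx h
      simpa [NormedSpace.dual_def] using this
    have hD0 : ∀ h ∈ D, h x = 0 := by
      intro h hh
      rw [hxapply h]
      exact hΞ0 h (Submodule.le_topologicalClosure _ hh)
    have hgx : ∀ i, g i x = 0 := fun i =>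
      hD0 _ (Submodule.mem_sup_left (Submodule.subset_span ⟨i, rfl⟩))
    have hxY : x ∈ Y := by
      by_contra hxY
      obtain ⟨ψ, hψ0, hψx⟩ := aux_separation Y hYc hxY
      have : ψ ∈ W := fun z hz => hψ0 z hz
      have := hD0 ψ (Submodule.mem_sup_right this)
      rw [hψx] at this
      exact one_ne_zero this
    have hx0 : x ≠ 0 := by
      intro h0
      have := hxapply f
      rw [h0, map_zero, hΞf] at this
      exact one_ne_zero this.symm
    have hxpos : 0 < ‖x‖ := norm_pos_iff.mpr hx0
    -- find a close element of the dense sequence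
    have hxcl : x ∈ closure (Set.range e) := hYe hxY
    rw [Metric.mem_closure_iff] at hxcl
    obtain ⟨y, ⟨i, rfl⟩, hdist⟩ := hxcl (‖x‖ / 4) (by linarith)
    have h1 : ‖e i‖ ≤ ‖x‖ / 4 := by
      have : g i (e i) = g i (e i - x) := by rw [map_sub, hgx i, sub_zero]
      have hb : g i (e i - x) ≤ ‖e i - x‖ := by
        calc g i (e i - x) ≤ ‖g i (e i - x)‖ := le_abs_self _
        _ ≤ ‖g i‖ * ‖e i - x‖ := (g i).le_opNorm _
        _ ≤ 1 * ‖e i - x‖ := by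
            exact mul_le_mul_of_nonneg_right (hg1 i) (norm_nonneg _)
        _ = ‖e i - x‖ := one_mul _
      have hd : ‖e i - x‖ ≤ ‖x‖ / 4 := by
        rw [← dist_eq_norm] at *
        exact le_of_lt (by rwa [dist_comm] at hdist)
      rw [← hg2 i, this]
      linarith
    have h2 : ‖x‖ - ‖x‖ / 4 ≤ ‖e i‖ := by
      have := norm_sub_norm_le x (e i)
      have hd : ‖x - e i‖ ≤ ‖x‖ / 4 := by
        rw [← dist_eq_norm]
        exact le_of_lt hdist
      linarith
    linarith
  -- diagonal extraction via compactness of a countable product of intervals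
  set T : ℕ → (ℕ → ℝ) := fun n i => g i (v n) with hT
  have hTmem : ∀ n, T n ∈ Set.univ.pi (fun _ : ℕ => Set.Icc (-C) C) := by
    intro n i _
    have : |g i (v n)| ≤ C := by
      calc |g i (v n)| ≤ ‖g i‖ * ‖v n‖ := (g i).le_opNorm _
      _ ≤ 1 * C := by
          exact mul_le_mul (hg1 i) (hv n) (norm_nonneg _) zero_le_one
      _ = C := one_mul _
    exact abs_le.mp this
  obtain ⟨L, _, φ, hφ, hTconv⟩ :=
    (isCompact_univ_pi (fun _ : ℕ => isCompact_Icc)).tendsto_subseq hTmem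
  have hgconv : ∀ i, Tendsto (fun n => g i (v (φ n))) atTop (𝓝 (L i)) := by
    intro i
    exact (tendsto_pi_nhds.mp hTconv) i
  refine ⟨φ, hφ, ?_⟩
  -- every element of D gives a convergent sequence
  have hDconv : ∀ h ∈ D, ∃ l : ℝ, Tendsto (fun n => h (v (φ n))) atTop (𝓝 l) := by
    intro h hh
    rw [hD, Submodule.mem_sup] at hh
    obtain ⟨y, hy, z, hz, rfl⟩ := hh
    have hyconv : ∃ l : ℝ, Tendsto (fun n => y (v (φ n))) atTop (𝓝 l) := by
      induction hy using Submodule.span_induction with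
      | mem p hp =>
          obtain ⟨i, rfl⟩ := hp
          exact ⟨L i, hgconv i⟩
      | zero => exact ⟨0, by simpa using tendsto_const_nhds⟩
      | add p q _ _ hp hq =>
          obtain ⟨lp, hlp⟩ := hp
          obtain ⟨lq, hlq⟩ := hq
          exact ⟨lp + lq, by simpa using hlp.add hlq⟩
      | smul r p _ hp =>
          obtain ⟨lp, hlp⟩ := hp
          exact ⟨r * lp, by simpa using hlp.const_mul r⟩
    obtain ⟨l, hl⟩ := hyconv
    refine ⟨l, ?_⟩
    have : (fun n => (y + z) (v (φ n))) = fun n => y (v (φ n)) := by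
      funext n
      simp [hz _ (hvY _)]
    rwa [this]
  -- hence every functional gives a Cauchy (so convergent) sequence
  have hcauchy : ∀ f : E →L[ℝ] ℝ, ∃ l : ℝ, Tendsto (fun n => f (v (φ n))) atTop (𝓝 l) := by
    intro f
    have hcs : CauchySeq (fun n => f (v (φ n))) := by
      rw [Metric.cauchySeq_iff]
      intro ε hε
      have hf := hdense f
      rw [← SetLike.mem_coe, Submodule.topologicalClosure_coe, Metric.mem_closure_iff] at hf
      obtain ⟨h, hhD, hdist⟩ := hf (ε / (4 * (C + 1))) (by positivity)
      obtain ⟨l, hl⟩ := hDconv h hhD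
      have hhc : CauchySeq (fun n => h (v (φ n))) := hl.cauchySeq
      rw [Metric.cauchySeq_iff] at hhc
      obtain ⟨N, hN⟩ := hhc (ε / 2) (by positivity)
      refine ⟨N, fun p hp q hq => ?_⟩
      have key : ∀ n, |f (v (φ n)) - h (v (φ n))| ≤ ε / 4 := by
        intro n
        have h1 : |(f - h) (v (φ n))| ≤ ‖f - h‖ * ‖v (φ n)‖ := (f - h).le_opNorm _
        have h2 : ‖f - h‖ ≤ ε / (4 * (C + 1)) := by
          rw [← dist_eq_norm]
          exact le_of_lt hdist
        have h3 : ‖f - h‖ * ‖v (φ n)‖ ≤ (ε / (4 * (C + 1))) * C :=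
          mul_le_mul h2 (hv _) (norm_nonneg _) (by positivity)
        have h4 : (ε / (4 * (C + 1))) * C ≤ ε / 4 := by
          rw [div_mul_eq_mul_div, div_le_div_iff₀ (by positivity) (by norm_num)]
          nlinarith
        have : |(f - h) (v (φ n))| ≤ ε / 4 := le_trans h1 (le_trans h3 h4)
        simpa using this
      have hpq := hN p hp q hq
      rw [Real.dist_eq] at hpq ⊢
      have kp := key p
      have kq := key q
      have : f (v (φ p)) - f (v (φ q)) =
          (f (v (φ p)) - h (v (φ p))) + (h (v (φ p)) - h (v (φ q)))
            + (h (v (φ q)) - f (v (φ q))) := by ring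
      rw [this]
      calc |_ + _ + _| ≤ |f (v (φ p)) - h (v (φ p))| + |h (v (φ p)) - h (v (φ q))|
            + |h (v (φ q)) - f (v (φ q))| := by
              exact le_trans (abs_add_le _ _) (by gcongr; exact abs_add_le _ _)
        _ < ε / 4 + ε / 2 + ε / 4 := by
            have := abs_sub_comm (h (v (φ q))) (f (v (φ q)))
            refine add_lt_add_of_lt_of_le (add_lt_add_of_le_of_lt kp hpq) ?_
            rw [this]
            exact kq
        _ = ε := by ring
    exact cauchySeq_tendsto_of_complete hcs
  choose Ψ hΨ using hcauchy
  -- Ψ is a continuous linear functional on the dual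
  have hadd : ∀ f₁ f₂ : E →L[ℝ] ℝ, Ψ (f₁ + f₂) = Ψ f₁ + Ψ f₂ := by
    intro f₁ f₂
    refine tendsto_nhds_unique (hΨ (f₁ + f₂)) ?_
    simpa using (hΨ f₁).add (hΨ f₂)
  have hsmul : ∀ (r : ℝ) (f : E →L[ℝ] ℝ), Ψ (r • f) = r * Ψ f := by
    intro r f
    refine tendsto_nhds_unique (hΨ (r • f)) ?_
    simpa using (hΨ f).const_mul r
  have hbound : ∀ f : E →L[ℝ] ℝ, ‖Ψ f‖ ≤ C * ‖f‖ := by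
    intro f
    have h1 : Tendsto (fun n => |f (v (φ n))|) atTop (𝓝 |Ψ f|) := (hΨ f).abs
    have h2 : ∀ n, |f (v (φ n))| ≤ C * ‖f‖ := by
      intro n
      calc |f (v (φ n))| ≤ ‖f‖ * ‖v (φ n)‖ := f.le_opNorm _
      _ ≤ ‖f‖ * C := by
          exact mul_le_mul_of_nonneg_left (hv _) (norm_nonneg _)
      _ = C * ‖f‖ := mul_comm _ _
    have := le_of_tendsto h1 (Filter.Eventually.of_forall h2)
    simpa [Real.norm_eq_abs] using this
  set Φ₀ : (E →L[ℝ] ℝ) →ₗ[ℝ] ℝ :=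
    { toFun := Ψ
      map_add' := hadd
      map_smul' := hsmul } with hΦ₀
  set Φ : (E →L[ℝ] ℝ) →L[ℝ] ℝ := LinearMap.mkContinuous Φ₀ C hbound with hΦ
  obtain ⟨x, hx⟩ := hrefl Φ
  refine ⟨x, fun f => ?_⟩
  have : f x = Ψ f := by
    have := ContinuousLinearMap.ext_iff.mp hx f
    simpa [NormedSpace.dual_def, hΦ, hΦ₀] using this
  rw [this]
  exact hΨ f

end WeakBW


namespace Setting

variable {X : Type*} [NormedAddCommGroup X] [NormedSpace ℝ X] (S : Setting X)

lemma P_eq_self {x : X} (hx : x ∈ S.Xp) : S.P x = x := by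
  have h1 : x - S.P x = S.Pm x := by
    have := S.P_add_Pm x
    linear_combination (norm := abel) -this
  have h2 : S.Pm x ∈ S.Xp := h1 ▸ Submodule.sub_mem _ hx (S.P_mem x)
  have h3 : S.Pm x = 0 := Submodule.disjoint_def.mp S.compl.disjoint _ h2 (S.Pm_mem x)
  have := S.P_add_Pm x
  rw [h3, add_zero] at this
  exact this

lemma Pm_eq_zero {x : X} (hx : x ∈ S.Xp) : S.Pm x = 0 := by
  have := S.P_add_Pm x
  rw [S.P_eq_self hx] at this
  linear_combination (norm := abel) this

lemma P_eq_zero {x : X} (hx : x ∈ S.Xm) : S.P x = 0 := by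
  have h1 : S.P x = x - S.Pm x := by
    have := S.P_add_Pm x
    linear_combination (norm := abel) this
  have h2 : S.P x ∈ S.Xm := h1 ▸ Submodule.sub_mem _ hx (S.Pm_mem x)
  exact Submodule.disjoint_def.mp S.compl.disjoint _ (S.P_mem x) h2

lemma Pm_eq_self {x : X} (hx : x ∈ S.Xm) : S.Pm x = x := by
  have := S.P_add_Pm x
  rw [S.P_eq_zero hx, zero_add] at this
  exact this

lemma P_add_of_mem {w z : X} (hw : w ∈ S.Xp) (hz : z ∈ S.Xm) : S.P (w + z) = w := by
  rw [map_add, S.P_eq_self hw, S.P_eq_zero hz, add_zero]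

lemma J_decomp {w z : X} (hw : w ∈ S.Xp) (hz : z ∈ S.Xm) :
    S.J (w + z) = (1 / 2) * ‖w‖ ^ 2 - S.I (w + z) := by
  rw [J, S.P_add_of_mem hw hz]

lemma I_cont : Continuous S.I := S.I_C1.continuous

lemma norm_Pm_le (u : X) : ‖S.Pm u‖ ≤ ‖u‖ := by
  have := S.norm_sq u
  nlinarith [norm_nonneg (S.Pm u), norm_nonneg u, sq_nonneg (‖S.P u‖)]

/-- `m (S.P u) = u` for `u ∈ M`. -/
lemma m_P_eq (hI5 : S.I5) (m : X → X) (hm : S.IsMaxMap m) {u : X} (hu : u ∈ S.M) :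
    m (S.P u) = u := by
  set w := S.P u with hw
  have hwXp : w ∈ S.Xp := S.P_mem u
  obtain ⟨hmM, hmXm, hmax⟩ := hm w hwXp
  by_contra hne
  have huw : u - w ∈ S.Xm := by
    have : u - w = S.Pm u := by
      have := S.P_add_Pm u
      rw [hw]
      linear_combination (norm := abel) -this
    rw [this]; exact S.Pm_mem u
  have huwne : w + (u - w) ≠ m w := by
    rw [add_sub_cancel]
    exact fun h => hne h.symm
  have h1 : S.J u < S.J (m w) := by
    have := hmax (u - w) huw huwne
    rwa [add_sub_cancel] at this
  -- also I u < I (m w) by I5, hence J (m w) < J u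
  have hv : (m w - u) ∈ S.Xm := by
    have : m w - u = (m w - w) - (u - w) := by abel
    rw [this]; exact Submodule.sub_mem _ hmXm huw
  have hvne : m w - u ≠ 0 := sub_ne_zero.mpr hne
  have h2 : S.I u < S.I (u + (m w - u)) := hI5 u hu _ hv hvne
  rw [add_sub_cancel] at h2
  have hPu : S.P (m w) = w := by
    have : m w = w + (m w - w) := by abel
    rw [this, S.P_add_of_mem hwXp hmXm]
  have hJu : S.J u = (1 / 2) * ‖w‖ ^ 2 - S.I u := by rw [J, ← hw]
  have hJmw : S.J (m w) = (1 / 2) * ‖w‖ ^ 2 - S.I (m w) := by rw [J, hPu]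
  rw [hJu, hJmw] at h1
  linarith

/-- The core convergence lemma: a subsequence of `m ∘ w` converges to `m wl`. -/
lemma core (hI1 : S.I1) (hI2 : S.I2) (hI3 : S.I3) (hI4 : S.I4)
    (m : X → X) (hm : S.IsMaxMap m) (w : ℕ → X) (wl : X)
    (hw : ∀ n, w n ∈ S.Xp) (hwl : wl ∈ S.Xp) (hconv : Tendsto w atTop (𝓝 wl)) :
    ∃ φ : ℕ → ℕ, StrictMono φ ∧
      Tendsto (fun n => m (w (φ n))) atTop (𝓝 (m wl)) := by
  set z : X := m wl - wl with hz
  have hzXm : z ∈ S.Xm := (hm wl hwl).2.1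
  have hwlz : wl + z = m wl := by rw [hz]; abel
  -- P (m (w n)) = w n
  have hPm : ∀ n, S.P (m (w n)) = w n := by
    intro n
    have h1 : m (w n) = w n + (m (w n) - w n) := by abel
    rw [h1, S.P_add_of_mem (hw n) ((hm (w n) (hw n)).2.1)]
  -- the key upper bound
  have haux : ∀ n, S.I (m (w n)) ≤ S.I (w n + z) := by
    intro n
    by_cases hcase : w n + z = m (w n)
    · rw [hcase]
    · have h1 := (hm (w n) (hw n)).2.2 z hzXm hcase
      rw [S.J_decomp (hw n) hzXm] at h1
      have h2 : S.J (m (w n)) = (1 / 2) * ‖w n‖ ^ 2 - S.I (m (w n)) := by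
        rw [J, hPm n]
      rw [h2] at h1
      linarith
  have hIc : Tendsto (fun n => S.I (w n + z)) atTop (𝓝 (S.I (m wl))) := by
    rw [← hwlz]
    exact (S.I_cont.tendsto _).comp (hconv.add_const z)
  -- boundedness of m (w n)
  have hbdd : ∃ C, ∀ n, ‖m (w n)‖ ≤ C := by
    by_contra hcon
    obtain ⟨φ, hφ, htop⟩ := aux_unbounded _ hcon
    have h4 := hI4 (fun n => m (w (φ n))) htop
    set L : ℝ := ‖wl‖ + S.I (m wl) with hL
    have hb : Tendsto (fun n => ‖w (φ n)‖ + S.I (w (φ n) + z)) atTop (𝓝 L) := by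
      have h1 : Tendsto (fun n => w (φ n)) atTop (𝓝 wl) := hconv.comp hφ.tendsto_atTop
      exact (h1.norm).add (hIc.comp hφ.tendsto_atTop)
    have hle : ∀ n, ‖S.P (m (w (φ n)))‖ + S.I (m (w (φ n)))
        ≤ ‖w (φ n)‖ + S.I (w (φ n) + z) := by
      intro n
      rw [hPm (φ n)]
      exact add_le_add le_rfl (haux (φ n))
    have hev1 : ∀ᶠ n in atTop, L + 1 < ‖S.P (m (w (φ n)))‖ + S.I (m (w (φ n))) :=
      h4.eventually (eventually_gt_atTop (L + 1))
    have hev2 : ∀ᶠ n in atTop, ‖w (φ n)‖ + S.I (w (φ n) + z) < L + 1 :=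
      hb.eventually (eventually_lt_nhds (by linarith : L < L + 1))
    obtain ⟨n, h1, h2⟩ := (hev1.and hev2).exists
    exact absurd (lt_of_lt_of_le h1 (hle n)) (not_lt.mpr (le_of_lt h2))
  obtain ⟨C, hC⟩ := hbdd
  -- weak compactness
  obtain ⟨φ, hφ, x, hweak⟩ := weak_bw S.reflexive (fun n => S.Pm (m (w n))) C
    (fun n => le_trans (S.norm_Pm_le _) (hC n))
  -- x ∈ Xm
  have hxXm : x ∈ S.Xm := by
    by_contra hxXm
    obtain ⟨f, hf0, hfx⟩ := aux_separation S.Xm S.Xm_closed hxXm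
    have h1 := hweak f
    have h2 : (fun n => f (S.Pm (m (w (φ n))))) = fun _ => (0 : ℝ) := by
      funext n
      exact hf0 _ (S.Pm_mem _)
    rw [h2] at h1
    have := tendsto_nhds_unique h1 tendsto_const_nhds
    rw [hfx] at this
    norm_num at this
  set ut : X := wl + x with hut
  have hutXm : x ∈ S.Xm := hxXm
  -- T-convergence of the subsequence to ut
  have hTC : S.TConv (fun n => m (w (φ n))) ut := by
    constructor
    · have h1 : (fun n => S.P (m (w (φ n)))) = fun n => w (φ n) := by
        funext n; exact hPm (φ n)
      rw [h1, S.P_add_of_mem hwl hxXm]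
      exact hconv.comp hφ.tendsto_atTop
    · intro f
      have h1 : S.Pm ut = x := by
        rw [hut, map_add, S.Pm_eq_zero hwl, S.Pm_eq_self hxXm, zero_add]
      rw [h1]
      exact hweak f
  have hliminf := hI2 _ _ hTC
  -- upper bound: eventually, I (m (w (φ n))) ≤ I (w (φ n) + z), tending to I (m wl)
  have hIcφ : Tendsto (fun n => S.I (w (φ n) + z)) atTop (𝓝 (S.I (m wl))) :=
    hIc.comp hφ.tendsto_atTop
  -- show ut = m wl
  have hut_eq : ut = m wl := by
    by_contra hne
    have h1 : wl + x ≠ m wl := by rw [← hut]; exact hne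
    have h2 := (hm wl hwl).2.2 x hxXm h1
    rw [S.J_decomp hwl hxXm] at h2
    have h3 : S.J (m wl) = (1 / 2) * ‖wl‖ ^ 2 - S.I (m wl) := by
      rw [← hwlz, S.J_decomp hwl hzXm, hwlz]
    rw [h3] at h2
    -- so I (m wl) < I ut
    have h4 : S.I (m wl) < S.I ut := by rw [hut]; linarith
    -- but I ut ≤ liminf ≤ I (m wl): contradiction
    -- liminf (I (m (w φ n))) ≤ I (m wl) since I (m (w φ n)) ≤ I(w φ n + z) → I (m wl)
    have h5 : atTop.liminf (fun n => S.I (m (w (φ n)))) ≤ S.I (m wl) := by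
      have hb1 : atTop.liminf (fun n => S.I (m (w (φ n)))) ≤
          atTop.liminf (fun n => S.I (w (φ n) + z)) := by
        apply Filter.liminf_le_liminf
        · exact Filter.Eventually.of_forall (fun n => haux (φ n))
        · exact ⟨0, Filter.eventually_map.mpr
            (Filter.Eventually.of_forall (fun n => hI1.2 _))⟩
        · exact hIcφ.isBoundedUnder_le.isCoboundedUnder_ge
      rw [hIcφ.liminf_eq] at hb1
      exact hb1
    linarith
  -- now I (m (w (φ n))) → I (m wl)
  have hImtend : Tendsto (fun n => S.I (m (w (φ n)))) atTop (𝓝 (S.I (m wl))) := by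
    apply tendsto_of_le_liminf_of_limsup_le
    · rw [← hut_eq]; exact hliminf
    · have hb1 : atTop.limsup (fun n => S.I (m (w (φ n)))) ≤
          atTop.limsup (fun n => S.I (w (φ n) + z)) := by
        apply Filter.limsup_le_limsup
        · exact Filter.Eventually.of_forall (fun n => haux (φ n))
        · exact Filter.IsBoundedUnder.isCoboundedUnder_le
            ⟨0, Filter.eventually_map.mpr
              (Filter.Eventually.of_forall (fun n => hI1.2 _))⟩
        · exact hIcφ.isBoundedUnder_le
      rw [hIcφ.limsup_eq] at hb1
      exact hb1
    · exact ⟨S.I (m wl) + 1, Filter.eventually_map.mpr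
        ((hIcφ.eventually (eventually_le_nhds (by linarith))).mono
          (fun n hn => le_trans (haux (φ n)) hn))⟩
    · exact ⟨0, Filter.eventually_map.mpr
        (Filter.Eventually.of_forall (fun n => hI1.2 _))⟩
  rw [← hut_eq] at hImtend
  have := hI3 _ _ hTC hImtend
  rw [hut_eq] at this
  exact ⟨φ, hφ, this⟩

end Setting


/-- Under (I1)–(I5): `m : X⁺ → M` is a homeomorphism with inverse `M ∋ u ↦ u⁺`:
`m` is continuous on `X⁺`, maps `X⁺` bijectively onto `M`, and `m(u⁺) = u` for
`u ∈ M` (the inverse `u ↦ u⁺` being continuous since the projection `P` is). -/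
theorem statement5
    {X : Type*} [NormedAddCommGroup X] [NormedSpace ℝ X]
    (S : Setting X)
    (hI1 : S.I1) (hI2 : S.I2) (hI3 : S.I3) (hI4 : S.I4) (hI5 : S.I5)
    (m : X → X) (hm : S.IsMaxMap m) :
    ContinuousOn m (S.Xp : Set X) ∧ m '' (S.Xp : Set X) = S.M ∧
      Set.InjOn m (S.Xp : Set X) ∧ ∀ u ∈ S.M, m (S.P u) = u := by
  have hmP : ∀ u ∈ S.M, m (S.P u) = u := fun u hu => S.m_P_eq hI5 m hm hu
  refine ⟨?_, ?_, ?_, hmP⟩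
  · -- continuity
    intro w hw
    rw [ContinuousWithinAt]
    rw [tendsto_iff_seq_tendsto]
    intro u hu
    have hmem : ∀ᶠ n in atTop, u n ∈ S.Xp := hu self_mem_nhdsWithin
    have hconv : Tendsto u atTop (𝓝 w) := hu.mono_right nhdsWithin_le_nhds
    apply tendsto_of_subseq_tendsto
    intro ns hns
    obtain ⟨N, hN⟩ := eventually_atTop.mp hmem
    obtain ⟨K, hK⟩ := eventually_atTop.mp (hns.eventually (eventually_ge_atTop N))
    set w' : ℕ → X := fun k => u (ns (k + K)) with hw'
    have hw'Xp : ∀ k, w' k ∈ S.Xp := fun k => hN _ (hK _ (Nat.le_add_left K k))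
    have hw'conv : Tendsto w' atTop (𝓝 w) :=
      (hconv.comp hns).comp (tendsto_add_atTop_nat K)
    obtain ⟨φ, hφ, hlim⟩ := S.core hI1 hI2 hI3 hI4 m hm w' w hw'Xp hw hw'conv
    exact ⟨fun n => φ n + K, hlim⟩
  · -- image
    ext u
    constructor
    · rintro ⟨w, hw, rfl⟩
      exact (hm w hw).1
    · intro hu
      exact ⟨S.P u, S.P_mem u, hmP u hu⟩
  · -- injectivity
    intro w₁ hw₁ w₂ hw₂ heq
    have h1 : m w₁ - w₁ ∈ S.Xm := (hm w₁ hw₁).2.1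
    have h2 : m w₂ - w₂ ∈ S.Xm := (hm w₂ hw₂).2.1
    have h3 : w₁ - w₂ ∈ S.Xm := by
      have : w₁ - w₂ = (m w₂ - w₂) - (m w₁ - w₁) := by rw [heq]; abel
      rw [this]; exact Submodule.sub_mem _ h2 h1
    have h4 : w₁ - w₂ ∈ S.Xp := Submodule.sub_mem _ hw₁ hw₂
    have := Submodule.disjoint_def.mp S.compl.disjoint _ h4 h3
    exact sub_eq_zero.mp this
end
end

section
/- Assume conditions (I1)–(I8). Then for every u ∈ N one has J(u) ≥ J((r/‖u⁺‖)·u⁺) ≥ a; in particular inf_N J ≥ a > 0, and every nonzero critical point w of 𝒥̃ satisfies 𝒥̃(w) ≥ a. -/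
open Topology Filter Set

noncomputable section

variable {X : Type*} [NormedAddCommGroup X] [NormedSpace ℝ X]

section AuxFA

variable {E : Type*} [NormedAddCommGroup E] [NormedSpace ℝ E]

open TopologicalSpace NormedSpace

lemma aux_vanish_on_submodule {f : E →L[ℝ] ℝ} {Y : Submodule ℝ E} {c : ℝ}
    (h : ∀ y ∈ Y, c < f y) : ∀ y ∈ Y, f y = 0 := by
  intro y hy
  by_contra hne
  have h1 := h (((c - 1) / f y) • y) (Y.smul_mem _ hy)
  rw [map_smul, smul_eq_mul, div_mul_cancel₀ _ hne] at h1
  linarith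

lemma aux_exists_functional {Y : Submodule ℝ E} (hY : IsClosed (Y : Set E)) {x : E}
    (hx : x ∉ Y) : ∃ f : E →L[ℝ] ℝ, (∀ y ∈ Y, f y = 0) ∧ f x ≠ 0 := by
  obtain ⟨f, c, hfx, hfy⟩ := geometric_hahn_banach_point_closed Y.convex hY hx
  have hz : ∀ y ∈ Y, f y = 0 := aux_vanish_on_submodule hfy
  refine ⟨f, hz, ?_⟩
  have h0 : c < f 0 := hfy 0 Y.zero_mem
  rw [map_zero] at h0
  intro hfx0
  rw [hfx0] at hfx
  linarith

/-- restriction of a functional to a submodule -/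
noncomputable def auxRestr (Y : Submodule ℝ E) (f : E →L[ℝ] ℝ) : ↥Y →L[ℝ] ℝ :=
  f.comp Y.subtypeL

lemma auxRestr_apply (Y : Submodule ℝ E) (f : E →L[ℝ] ℝ) (y : ↥Y) :
    auxRestr Y f y = f ↑y := rfl

/-- a closed subspace of a reflexive space is reflexive -/
lemma aux_reflexive_submodule
    (hrefl : Function.Surjective (inclusionInDoubleDual ℝ E))
    (Y : Submodule ℝ E) (hY : IsClosed (Y : Set E)) :
    Function.Surjective (inclusionInDoubleDual ℝ ↥Y) := by
  intro T
  -- restriction as a continuous linear map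
  have hbound : ∀ f : E →L[ℝ] ℝ, ‖auxRestr Y f‖ ≤ 1 * ‖f‖ := by
    intro f
    rw [one_mul]
    refine ContinuousLinearMap.opNorm_le_bound _ (norm_nonneg f) fun y => ?_
    simpa [auxRestr_apply] using f.le_opNorm (y : E)
  let ρ : StrongDual ℝ E →L[ℝ] StrongDual ℝ ↥Y :=
    LinearMap.mkContinuous
      { toFun := fun f => auxRestr Y f
        map_add' := by intro f g; ext y; simp [auxRestr]
        map_smul' := by intro c f; ext y; simp [auxRestr] }
      1 hbound
  have hρ : ∀ (f : E →L[ℝ] ℝ) (y : ↥Y), ρ f y = f ↑y := fun f y => rfl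
  obtain ⟨x, hxT⟩ := hrefl (T.comp ρ)
  have hxval : ∀ f : E →L[ℝ] ℝ, f x = T (ρ f) := by
    intro f
    have := congrFun (congrArg DFunLike.coe hxT) f
    simpa [inclusionInDoubleDual, NormedSpace.dual_def] using this
  have hxY : x ∈ Y := by
    by_contra hxY
    obtain ⟨f, hf0, hfx⟩ := aux_exists_functional hY hxY
    have hρf : ρ f = 0 := by
      ext y; simpa [hρ] using hf0 ↑y y.2
    have := hxval f
    rw [hρf, map_zero] at this
    exact hfx this
  refine ⟨⟨x, hxY⟩, ?_⟩
  ext g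
  obtain ⟨f, hf, _⟩ := exists_extension_norm_eq Y g
  have hρfg : ρ f = g := by ext y; rw [hρ]; exact hf y
  have : inclusionInDoubleDual ℝ ↥Y ⟨x, hxY⟩ g = g ⟨x, hxY⟩ := rfl
  rw [this, ← hρfg, ← hxval f]
  rfl

end AuxFA
section AuxSep

variable {E : Type*} [NormedAddCommGroup E] [NormedSpace ℝ E]

open TopologicalSpace NormedSpace

lemma aux_separable_of_dual_separable [SeparableSpace (StrongDual ℝ E)] :
    SeparableSpace E := by
  obtain ⟨u, hu⟩ := TopologicalSpace.exists_dense_seq (StrongDual ℝ E)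
  have hex : ∀ n, ∃ x : E, ‖x‖ ≤ 1 ∧ (u n ≠ 0 → ‖u n‖ / 2 < ‖u n x‖) := by
    intro n
    by_cases h : u n = 0
    · exact ⟨0, by simp, fun h' => absurd h h'⟩
    · have hpos : 0 < ‖u n‖ := by
        rcases (norm_nonneg (u n)).lt_or_eq with h' | h'
        · exact h'
        · exact absurd (ContinuousLinearMap.opNorm_zero_iff _ |>.mp h'.symm) h
      obtain ⟨x, hx1, hx2⟩ := (u n).exists_lt_apply_of_lt_opNorm (by linarith : ‖u n‖ / 2 < ‖u n‖)
      exact ⟨x, hx1.le, fun _ => hx2⟩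
  choose x hx1 hx2 using hex
  set K := (Submodule.span ℝ (Set.range x)).topologicalClosure with hKdef
  have hKsep : TopologicalSpace.IsSeparable (K : Set E) := by
    rw [Submodule.topologicalClosure_coe]
    exact ((Set.countable_range x).isSeparable.span).closure
  have hKtop : K = ⊤ := by
    by_contra hKne
    have : ∃ x₀ : E, x₀ ∉ K := by
      by_contra hall
      push_neg at hall
      exact hKne (Submodule.eq_top_iff'.mpr hall)
    obtain ⟨x₀, hx₀⟩ := this
    obtain ⟨f, hf0, hfx⟩ := aux_exists_functional (Submodule.span ℝ (Set.range x)).isClosed_topologicalClosure hx₀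
    have hfpos : 0 < ‖f‖ := by
      rcases (norm_nonneg f).lt_or_eq with h' | h'
      · exact h'
      · exact absurd ((ContinuousLinearMap.opNorm_zero_iff _).mp h'.symm)
          (fun h9 => hfx (by rw [h9]; rfl))
    obtain ⟨n, hn⟩ := hu.exists_dist_lt f (by positivity : (0:ℝ) < ‖f‖/4)
    rw [dist_comm, dist_eq_norm] at hn
    have hun : 3/4 * ‖f‖ < ‖u n‖ := by
      have h9 := norm_sub_norm_le f (u n)
      rw [norm_sub_rev] at h9
      linarith
    have hne : u n ≠ 0 := by
      intro h0
      rw [h0, norm_zero] at hun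
      linarith
    have h2 := hx2 n hne
    have hxK : (x n) ∈ K := by
      apply Submodule.le_topologicalClosure
      exact Submodule.subset_span ⟨n, rfl⟩
    have heq : u n (x n) = (u n - f) (x n) := by
      simp [hf0 _ hxK]
    rw [heq] at h2
    have hle : ‖(u n - f) (x n)‖ ≤ ‖u n - f‖ * ‖x n‖ := (u n - f).le_opNorm _
    have hle2 : ‖u n - f‖ * ‖x n‖ ≤ ‖f‖/4 * 1 :=
      mul_le_mul hn.le (hx1 n) (norm_nonneg _) (by positivity)
    linarith
  have : TopologicalSpace.IsSeparable (Set.univ : Set E) := by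
    rw [← Submodule.top_coe (R := ℝ) (M := E), ← hKtop]
    exact hKsep
  exact isSeparable_univ_iff.mp this

lemma aux_dual_separable [SeparableSpace E]
    (hrefl : Function.Surjective (inclusionInDoubleDual ℝ E)) :
    SeparableSpace (StrongDual ℝ E) := by
  have : SeparableSpace (StrongDual ℝ (StrongDual ℝ E)) :=
    hrefl.denseRange.separableSpace (inclusionInDoubleDual ℝ E).continuous
  exact aux_separable_of_dual_separable

end AuxSep
section AuxES

variable {E : Type*} [NormedAddCommGroup E] [NormedSpace ℝ E]

open TopologicalSpace NormedSpace

lemma aux_weak_seq_compact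
    (hrefl : Function.Surjective (inclusionInDoubleDual ℝ E))
    (v : ℕ → E) {C : ℝ} (hb : ∀ n, ‖v n‖ ≤ C) :
    ∃ φ : ℕ → ℕ, StrictMono φ ∧ ∃ x : E, WConv (fun n => v (φ n)) x := by
  set Y := (Submodule.span ℝ (Set.range v)).topologicalClosure with hYdef
  have hYc : IsClosed (Y : Set E) := Submodule.isClosed_topologicalClosure _
  have hYrefl := aux_reflexive_submodule hrefl Y hYc
  have hYsep : SeparableSpace ↥Y := by
    have h1 : TopologicalSpace.IsSeparable (Y : Set E) := by
      rw [hYdef, Submodule.topologicalClosure_coe]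
      exact ((Set.countable_range v).isSeparable.span).closure
    exact h1.separableSpace
  have hDsep : SeparableSpace (StrongDual ℝ ↥Y) := aux_dual_separable hYrefl
  obtain ⟨f, hf⟩ := TopologicalSpace.exists_dense_seq (StrongDual ℝ ↥Y)
  have hmem : ∀ n, v n ∈ Y := fun n =>
    Submodule.le_topologicalClosure _ (Submodule.subset_span ⟨n, rfl⟩)
  set y : ℕ → ↥Y := fun n => ⟨v n, hmem n⟩ with hydef
  have hynorm : ∀ n, ‖y n‖ ≤ C := fun n => hb n
  have hC0 : 0 ≤ C := le_trans (norm_nonneg _) (hb 0)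
  set g : ℕ → (ℕ → ℝ) := fun n k => f k (y n) with hgdef
  have hgmem : ∀ n, g n ∈ Set.univ.pi (fun k => Set.Icc (-(‖f k‖ * C)) (‖f k‖ * C)) := by
    intro n k _
    have h1 : ‖f k (y n)‖ ≤ ‖f k‖ * ‖y n‖ := (f k).le_opNorm _
    have h2 : ‖f k‖ * ‖y n‖ ≤ ‖f k‖ * C :=
      mul_le_mul_of_nonneg_left (hynorm n) (f k).opNorm_nonneg
    rw [Real.norm_eq_abs] at h1
    have := abs_le.mp (h1.trans h2)
    exact ⟨this.1, this.2⟩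
  have hcomp : IsCompact (Set.univ.pi fun k => Set.Icc (-(‖f k‖ * C)) (‖f k‖ * C)) :=
    isCompact_univ_pi fun k => isCompact_Icc
  obtain ⟨L, -, φ, hφ, hconv⟩ := hcomp.tendsto_subseq hgmem
  have hptconv : ∀ k, Tendsto (fun n => f k (y (φ n))) atTop (𝓝 (L k)) := fun k =>
    tendsto_pi_nhds.mp hconv k
  have hcauchy : ∀ h : StrongDual ℝ ↥Y, ∃ l, Tendsto (fun n => h (y (φ n))) atTop (𝓝 l) := by
    intro h
    have hcs : CauchySeq (fun n => h (y (φ n))) := by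
      rw [Metric.cauchySeq_iff]
      intro ε hε
      obtain ⟨k, hk⟩ := hf.exists_dist_lt h (show (0:ℝ) < ε / (3 * (C + 1)) by positivity)
      replace hk : ‖h - f k‖ < ε / (3 * (C + 1)) := by rw [← dist_eq_norm h (f k)]; exact hk
      have hfc := (hptconv k).cauchySeq
      rw [Metric.cauchySeq_iff] at hfc
      obtain ⟨N, hN⟩ := hfc (ε / 3) (by positivity)
      refine ⟨N, fun a ha b hb' => ?_⟩
      have est : ∀ n, |h (y (φ n)) - f k (y (φ n))| ≤ ε / (3 * (C + 1)) * C := by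
        intro n
        have h1 : ‖(h - f k) (y (φ n))‖ ≤ ‖h - f k‖ * ‖y (φ n)‖ := (h - f k).le_opNorm _
        have h2 : ‖h - f k‖ * ‖y (φ n)‖ ≤ ε / (3 * (C + 1)) * C := by
          exact mul_le_mul hk.le (hynorm _) (norm_nonneg _) (by positivity)
        simpa [ContinuousLinearMap.sub_apply] using h1.trans h2
      have hsmall : ε / (3 * (C + 1)) * C ≤ ε / 3 := by
        rw [div_mul_eq_mul_div, div_le_div_iff₀ (by positivity) (by norm_num)]
        nlinarith
      have hd := hN a ha b hb'
      rw [Real.dist_eq] at hd ⊢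
      have e1 := est a
      have e2 := est b
      have : |h (y (φ a)) - h (y (φ b))| ≤
          |h (y (φ a)) - f k (y (φ a))| + |f k (y (φ a)) - f k (y (φ b))|
          + |f k (y (φ b)) - h (y (φ b))| := by
        have := abs_sub_abs_le_abs_sub (h (y (φ a))) (h (y (φ b)))
        calc |h (y (φ a)) - h (y (φ b))|
            = |(h (y (φ a)) - f k (y (φ a))) + (f k (y (φ a)) - f k (y (φ b)))
              + (f k (y (φ b)) - h (y (φ b)))| := by ring_nf
          _ ≤ _ := by
              apply (abs_add_le _ _).trans
              gcongr
              exact abs_add_le _ _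
      rw [abs_sub_comm (f k (y (φ b)))] at this
      linarith
    exact cauchySeq_tendsto_of_complete hcs
  choose T hT using hcauchy
  have hTadd : ∀ h₁ h₂ : StrongDual ℝ ↥Y, T (h₁ + h₂) = T h₁ + T h₂ := by
    intro h₁ h₂
    refine tendsto_nhds_unique (hT (h₁ + h₂)) ?_
    have := (hT h₁).add (hT h₂)
    simpa [ContinuousLinearMap.add_apply] using this
  have hTsmul : ∀ (c : ℝ) (h : StrongDual ℝ ↥Y), T (c • h) = c * T h := by
    intro c h
    refine tendsto_nhds_unique (hT (c • h)) ?_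
    have := (hT h).const_mul c
    simpa [ContinuousLinearMap.smul_apply, smul_eq_mul] using this
  have hTbound : ∀ h : StrongDual ℝ ↥Y, ‖T h‖ ≤ C * ‖h‖ := by
    intro h
    have h1 : Tendsto (fun n => ‖h (y (φ n))‖) atTop (𝓝 ‖T h‖) := (hT h).norm
    refine le_of_tendsto h1 (Filter.Eventually.of_forall fun n => ?_)
    have := (h.le_opNorm (y (φ n))).trans
      (mul_le_mul_of_nonneg_left (hynorm (φ n)) (norm_nonneg h))
    linarith [this]
  let TL : StrongDual ℝ (StrongDual ℝ ↥Y) := LinearMap.mkContinuous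
    { toFun := T
      map_add' := hTadd
      map_smul' := by intro c h; simpa [smul_eq_mul] using hTsmul c h } C hTbound
  obtain ⟨yhat, hyhat⟩ := hYrefl TL
  have hyval : ∀ h : StrongDual ℝ ↥Y, h yhat = T h := by
    intro h
    have := congrFun (congrArg DFunLike.coe hyhat) h
    exact this
  refine ⟨φ, hφ, ↑yhat, ?_⟩
  intro F
  have h1 : Tendsto (fun n => (auxRestr Y F) (y (φ n))) atTop (𝓝 ((auxRestr Y F) yhat)) := by
    rw [hyval]
    exact hT _
  simpa [auxRestr_apply] using h1

end AuxES
namespace Setting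

variable {X : Type*} [NormedAddCommGroup X] [NormedSpace ℝ X] (S : Setting X)

/-- the projection onto `X⁺` as a continuous linear map -/
noncomputable def Pc : X →L[ℝ] X := ⟨S.P, S.P_cont⟩

/-- the projection onto `X⁺` as a continuous linear map into `X⁺` -/
noncomputable def pf : X →L[ℝ] ↥S.Xp := S.Pc.codRestrict S.Xp S.P_mem

@[simp] lemma pf_coe (u : X) : (S.pf u : X) = S.P u := rfl

lemma norm_pf (u : X) : ‖S.pf u‖ = ‖S.P u‖ := rfl

/-- the inner product structure on `X⁺` -/
noncomputable def ip : InnerProductSpace ℝ ↥S.Xp :=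
  InnerProductSpace.ofNorm ℝ (by
    intro x y
    have h := S.parallelogram ↑x x.2 ↑y y.2
    have e1 : ‖x + y‖ = ‖(↑x + ↑y : X)‖ := rfl
    have e2 : ‖x - y‖ = ‖(↑x - ↑y : X)‖ := rfl
    have e3 : ‖x‖ = ‖(x : X)‖ := rfl
    have e4 : ‖y‖ = ‖(y : X)‖ := rfl
    rw [e1, e2, e3, e4]
    nlinarith [h])

/-- the derivative of `J` -/
noncomputable def Jd (u : X) : X →L[ℝ] ℝ :=
  letI := S.ip
  (innerSL ℝ (S.pf u)).comp S.pf - fderiv ℝ S.I u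

lemma I_diff : Differentiable ℝ S.I := S.I_C1.differentiable one_ne_zero

lemma hasFDerivAt_J (u : X) : HasFDerivAt S.J (S.Jd u) u := by
  letI := S.ip
  have h1 : HasFDerivAt (fun w : X => ‖S.pf w‖ ^ 2)
      (2 • (innerSL ℝ (S.pf u)).comp S.pf) u := S.pf.hasFDerivAt.norm_sq
  have h2 := h1.const_mul (1/2 : ℝ)
  have h3 : HasFDerivAt S.I (fderiv ℝ S.I u) u := (S.I_diff u).hasFDerivAt
  have h4 := h2.sub h3
  have hJ : S.J = fun w => (1/2 : ℝ) * ‖S.pf w‖ ^ 2 - S.I w := by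
    funext w
    rfl
  rw [hJ]
  refine h4.congr_fderiv ?_
  ext z
  simp only [Jd, ContinuousLinearMap.coe_sub', Pi.sub_apply, ContinuousLinearMap.coe_smul',
    Pi.smul_apply, smul_eq_mul]
  ring

lemma fderiv_J (u : X) : fderiv ℝ S.J u = S.Jd u := (S.hasFDerivAt_J u).fderiv

lemma J_cont : Continuous S.J := by
  rw [continuous_iff_continuousAt]
  exact fun u => (S.hasFDerivAt_J u).differentiableAt.continuousAt

lemma Jd_cont : Continuous S.Jd := by
  letI := S.ip
  have hc1 : Continuous (fun u : X => (innerSL ℝ (S.pf u)).comp S.pf) := by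
    have he : (fun u : X => (innerSL ℝ (S.pf u)).comp S.pf)
        = fun u => ((ContinuousLinearMap.compSL X ↥S.Xp ℝ (RingHom.id ℝ)
            (RingHom.id ℝ)).flip S.pf) (innerSL ℝ (S.pf u)) := by
      funext u; rfl
    rw [he]
    exact (((ContinuousLinearMap.compSL X ↥S.Xp ℝ (RingHom.id ℝ)
      (RingHom.id ℝ)).flip S.pf).continuous).comp
        ((innerSL ℝ).continuous.comp S.pf.continuous)
  exact hc1.sub (S.I_C1.continuous_fderiv one_ne_zero)

lemma P_eq_zero_of_mem_Xm {v : X} (hv : v ∈ S.Xm) : S.P v = 0 := by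
  have h1 : S.P v ∈ S.Xp := S.P_mem v
  have h2 : S.P v ∈ S.Xm := by
    have : S.P v = v - S.Pm v := eq_sub_of_add_eq (S.P_add_Pm v)
    rw [this]
    exact S.Xm.sub_mem hv (S.Pm_mem v)
  exact (Submodule.disjoint_def.mp S.compl.disjoint) _ h1 h2

lemma P_eq_self_of_mem_Xp {u : X} (hu : u ∈ S.Xp) : S.P u = u := by
  have h1 : S.Pm u ∈ S.Xp := by
    have : S.Pm u = u - S.P u := eq_sub_of_add_eq' (S.P_add_Pm u)
    rw [this]
    exact S.Xp.sub_mem hu (S.P_mem u)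
  have h2 : S.Pm u = 0 :=
    (Submodule.disjoint_def.mp S.compl.disjoint) _ h1 (S.Pm_mem u)
  have := S.P_add_Pm u
  rw [h2, add_zero] at this
  exact this

lemma sub_P_mem_Xm (u : X) : u - S.P u ∈ S.Xm := by
  have : u - S.P u = S.Pm u := (eq_sub_of_add_eq' (S.P_add_Pm u)).symm
  rw [this]
  exact S.Pm_mem u

lemma P_eq_of_sub_mem_Xm {u x : X} (hx : x ∈ S.Xp) (h : u - x ∈ S.Xm) : S.P u = x := by
  have : S.P u = S.P x + S.P (u - x) := by
    rw [← map_add]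
    congr 1
    abel
  rw [this, S.P_eq_self_of_mem_Xp hx, S.P_eq_zero_of_mem_Xm h, add_zero]

lemma Jd_apply_self (u : X) : S.Jd u u = ‖S.P u‖ ^ 2 - fderiv ℝ S.I u u := by
  letI := S.ip
  simp only [Jd, ContinuousLinearMap.coe_sub', Pi.sub_apply, ContinuousLinearMap.coe_comp',
    Function.comp_apply, innerSL_apply_apply]
  change inner ℝ (S.pf u) (S.pf u) - _ = _
  rw [real_inner_self_eq_norm_sq, S.norm_pf]

lemma Jd_apply_Xm (u : X) {z : X} (hz : z ∈ S.Xm) :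
    S.Jd u z = - fderiv ℝ S.I u z := by
  letI := S.ip
  have hpz : S.pf z = 0 := by
    apply Subtype.ext
    simp [S.P_eq_zero_of_mem_Xm hz]
  simp only [Jd, ContinuousLinearMap.coe_sub', Pi.sub_apply, ContinuousLinearMap.coe_comp',
    Function.comp_apply, innerSL_apply_apply, hpz, inner_zero_right]
  change inner ℝ (S.pf u) (S.pf z) - _ = _
  rw [hpz, inner_zero_right]
  ring

end Setting
namespace Setting

variable {X : Type*} [NormedAddCommGroup X] [NormedSpace ℝ X] (S : Setting X)

lemma N_P_ne_zero {u : X} (hu : u ∈ S.N) : S.P u ≠ 0 := by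
  intro h0
  apply hu.1
  have h1 : u = S.Pm u := by
    have := S.P_add_Pm u
    rw [h0, zero_add] at this
    exact this.symm
  rw [h1]
  exact S.Pm_mem u

lemma N_fderiv_I_self {u : X} (hu : u ∈ S.N) : fderiv ℝ S.I u u = ‖S.P u‖ ^ 2 := by
  have h := hu.2.1
  rw [S.fderiv_J, S.Jd_apply_self] at h
  linarith

lemma N_fderiv_I_Xm {u : X} (hu : u ∈ S.N) {v : X} (hv : v ∈ S.Xm) :
    fderiv ℝ S.I u v = 0 := by
  have h := hu.2.2 v hv
  rw [S.fderiv_J, S.Jd_apply_Xm _ hv] at h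
  linarith

lemma J_scaled_le (hI8 : S.I8) {u : X} (hu : u ∈ S.N) {t : ℝ} (ht : 0 ≤ t)
    {v : X} (hv : v ∈ S.Xm) : S.J (t • u + v) ≤ S.J u := by
  have h8 := hI8 u hu t ht v hv
  rw [S.N_fderiv_I_self hu, S.N_fderiv_I_Xm hu hv] at h8
  have hP : S.P (t • u + v) = t • S.P u := by
    rw [map_add, map_smul, S.P_eq_zero_of_mem_Xm hv, add_zero]
  have hn : ‖S.P (t • u + v)‖ ^ 2 = t ^ 2 * ‖S.P u‖ ^ 2 := by
    rw [hP, norm_smul, mul_pow, Real.norm_eq_abs, sq_abs]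
  simp only [J] at h8 ⊢
  rw [hn]
  nlinarith [h8]

lemma part_one (hI8 : S.I8) {r a : ℝ} (hI6 : S.I6 r a) {u : X} (hu : u ∈ S.N) :
    S.J ((r / ‖S.P u‖) • S.P u) ≤ S.J u ∧ a ≤ S.J ((r / ‖S.P u‖) • S.P u) := by
  obtain ⟨hr, ha, hapos⟩ := hI6
  have hPne := S.N_P_ne_zero hu
  have hPpos : 0 < ‖S.P u‖ := norm_pos_iff.mpr hPne
  set t := r / ‖S.P u‖ with htdef
  have ht : 0 ≤ t := div_nonneg hr.le (norm_nonneg _)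
  have hv : -(t • (u - S.P u)) ∈ S.Xm :=
    S.Xm.neg_mem (S.Xm.smul_mem _ (S.sub_P_mem_Xm u))
  have key := S.J_scaled_le hI8 hu ht hv
  have heq : t • u + -(t • (u - S.P u)) = t • S.P u := by
    rw [smul_sub]; abel
  rw [heq] at key
  refine ⟨key, ?_⟩
  have hmem : (t • S.P u) ∈ S.Xp := S.Xp.smul_mem _ (S.P_mem u)
  have hnorm : ‖t • S.P u‖ = r := by
    rw [norm_smul, Real.norm_eq_abs, abs_of_nonneg ht, htdef]
    field_simp
  by_cases hbdd : BddBelow (S.J '' {x : X | x ∈ S.Xp ∧ ‖x‖ = r})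
  · rw [ha]
    exact csInf_le hbdd ⟨t • S.P u, ⟨hmem, hnorm⟩, rfl⟩
  · exfalso
    rw [Real.sInf_of_not_bddBelow hbdd] at ha
    rw [ha] at hapos
    exact lt_irrefl 0 hapos

end Setting
namespace Setting

variable {X : Type*} [NormedAddCommGroup X] [NormedSpace ℝ X] (S : Setting X) {m : X → X}

lemma maxmap_J_le (hm : S.IsMaxMap m) {x : X} (hx : x ∈ S.Xp) {z : X} (hz : z ∈ S.Xm) :
    S.J (x + z) ≤ S.J (m x) := by
  obtain ⟨-, -, hmax⟩ := hm x hx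
  by_cases h : x + z = m x
  · rw [h]
  · exact (hmax z hz h).le

lemma maxmap_P (hm : S.IsMaxMap m) {x : X} (hx : x ∈ S.Xp) : S.P (m x) = x :=
  S.P_eq_of_sub_mem_Xm hx (hm x hx).2.1

lemma m_subseq (hm : S.IsMaxMap m) (hI1 : S.I1) (hI2 : S.I2) (hI3 : S.I3) (hI4 : S.I4)
    (x : ℕ → X) (hx : ∀ n, x n ∈ S.Xp) {x₀ : X} (hx₀ : x₀ ∈ S.Xp)
    (hconv : Filter.Tendsto x Filter.atTop (𝓝 x₀)) :
    ∃ ms : ℕ → ℕ, StrictMono ms ∧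
      Filter.Tendsto (fun n => m (x (ms n))) Filter.atTop (𝓝 (m x₀)) := by
  classical
  set u : ℕ → X := fun n => m (x n) with hu
  set u₀ : X := m x₀ with hu₀
  set v₀ : X := u₀ - x₀ with hv₀
  have hv₀m : v₀ ∈ S.Xm := (hm x₀ hx₀).2.1
  set c : ℕ → ℝ := fun n => 1/2 * ‖x n‖^2 - S.J (x n + v₀) with hc
  have hPu : ∀ n, S.P (u n) = x n := fun n => S.maxmap_P hm (hx n)
  have hPu₀ : S.P u₀ = x₀ := S.maxmap_P hm hx₀
  have hJu₀ : S.J u₀ = 1/2 * ‖x₀‖^2 - S.I u₀ := by simp only [J, hPu₀]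
  have hcconv : Tendsto c atTop (𝓝 (S.I u₀)) := by
    have h1 : Tendsto (fun n => x n + v₀) atTop (𝓝 (x₀ + v₀)) :=
      hconv.add tendsto_const_nhds
    have h2 : Tendsto (fun n => S.J (x n + v₀)) atTop (𝓝 (S.J (x₀ + v₀))) :=
      (S.J_cont.tendsto _).comp h1
    have h3 : Tendsto (fun n => 1/2 * ‖x n‖^2) atTop (𝓝 (1/2 * ‖x₀‖^2)) :=
      ((hconv.norm).pow 2).const_mul _
    have h4 := h3.sub h2
    have he : x₀ + v₀ = u₀ := by rw [hv₀]; abel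
    rw [he] at h4
    have : S.I u₀ = 1/2 * ‖x₀‖^2 - S.J u₀ := by rw [hJu₀]; ring
    rw [this]
    exact h4
  have hIle : ∀ n, S.I (u n) ≤ c n := by
    intro n
    have h1 : S.J (x n + v₀) ≤ S.J (u n) := S.maxmap_J_le hm (hx n) hv₀m
    have h2 : S.J (u n) = 1/2 * ‖x n‖^2 - S.I (u n) := by simp only [J, hPu n]
    rw [h2] at h1
    simp only [hc]
    linarith
  have hI0 : ∀ n, 0 ≤ S.I (u n) := fun n => hI1.2 _
  obtain ⟨Cc, hCc⟩ : ∃ Cc, ∀ n, c n ≤ Cc := by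
    obtain ⟨Cc, hCc⟩ := hcconv.bddAbove_range
    exact ⟨Cc, fun n => hCc ⟨n, rfl⟩⟩
  obtain ⟨Cx, hCx⟩ : ∃ Cx, ∀ n, ‖x n‖ ≤ Cx := by
    obtain ⟨Cx, h⟩ := hconv.norm.bddAbove_range
    exact ⟨Cx, fun n => h ⟨n, rfl⟩⟩
  have hub : ∃ Cu, ∀ n, ‖u n‖ ≤ Cu := by
    by_contra hnb
    push_neg at hnb
    have hfreq : ∀ k : ℕ, ∃ᶠ n in atTop, (k:ℝ) < ‖u n‖ := by
      intro k
      rw [Filter.frequently_atTop]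
      intro N
      by_contra hcon
      push_neg at hcon
      set MM : ℝ := (Finset.range (N+1)).sup' (by simp) (fun i => ‖u i‖) with hMM
      obtain ⟨n₀, hn₀⟩ := hnb (MM ⊔ (k:ℝ))
      rcases le_or_gt N n₀ with h | h
      · have h9 : ‖u n₀‖ ≤ (k:ℝ) := hcon n₀ h
        have h10 : ‖u n₀‖ ≤ MM ⊔ (k:ℝ) := h9.trans le_sup_right
        exact absurd h10 (not_le.mpr hn₀)
      · have h9 : ‖u n₀‖ ≤ MM :=
          Finset.le_sup' (f := fun i => ‖u i‖) (Finset.mem_range.mpr (by omega))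
        have h10 : ‖u n₀‖ ≤ MM ⊔ (k:ℝ) := h9.trans le_sup_left
        exact absurd h10 (not_le.mpr hn₀)
    obtain ⟨ψ, hψmono, hψ⟩ := Filter.extraction_forall_of_frequently hfreq
    have htend : Tendsto (fun k => ‖u (ψ k)‖) atTop atTop :=
      tendsto_atTop_mono (fun k => (hψ k).le) tendsto_natCast_atTop_atTop
    have hI4' := hI4 (fun k => u (ψ k)) htend
    obtain ⟨k, hk⟩ := (hI4'.eventually_gt_atTop (Cx + Cc)).exists
    have hle : ‖S.P (u (ψ k))‖ + S.I (u (ψ k)) ≤ Cx + Cc := by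
      have e1 : ‖S.P (u (ψ k))‖ ≤ Cx := by rw [hPu]; exact hCx _
      have e2 : S.I (u (ψ k)) ≤ Cc := (hIle _).trans (hCc _)
      linarith
    linarith
  obtain ⟨Cu, hCu⟩ := hub
  set vv : ℕ → X := fun n => u n - x n with hvv
  have hvvm : ∀ n, vv n ∈ S.Xm := by
    intro n
    exact (hm (x n) (hx n)).2.1
  have hvvb : ∀ n, ‖vv n‖ ≤ Cu + Cx := by
    intro n
    refine (norm_sub_le _ _).trans ?_
    exact add_le_add (hCu n) (hCx n)
  obtain ⟨φ, hφmono, ξ, hξ⟩ := aux_weak_seq_compact S.reflexive vv hvvb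
  have hξm : ξ ∈ S.Xm := by
    by_contra hcon
    obtain ⟨f, hf0, hfx⟩ := aux_exists_functional S.Xm_closed hcon
    have h1 := hξ f
    have h2 : ∀ n, f (vv (φ n)) = 0 := fun n => hf0 _ (hvvm _)
    have h3 : Tendsto (fun n : ℕ => (0:ℝ)) atTop (𝓝 (f ξ)) := by
      have : (fun n => f (vv (φ n))) = fun _ : ℕ => (0:ℝ) := funext h2
      rwa [this] at h1
    exact hfx (tendsto_nhds_unique h3 tendsto_const_nhds)
  have hPm_eq : ∀ y : X, S.Pm y = y - S.P y := fun y => eq_sub_of_add_eq' (S.P_add_Pm y)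
  have hPx₀ξ : S.P (x₀ + ξ) = x₀ := by
    rw [map_add, S.P_eq_self_of_mem_Xp hx₀, S.P_eq_zero_of_mem_Xm hξm, add_zero]
  have hTC : S.TConv (fun n => u (φ n)) (x₀ + ξ) := by
    constructor
    · have hgoal : Tendsto (fun n => x (φ n)) atTop (𝓝 x₀) :=
        hconv.comp (hφmono.tendsto_atTop)
      have he1 : (fun n => S.P (u (φ n))) = fun n => x (φ n) := funext fun n => hPu _
      rw [he1, hPx₀ξ]
      exact hgoal
    · intro f
      have he2 : ∀ n, S.Pm (u (φ n)) = vv (φ n) := by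
        intro n
        rw [hPm_eq, hPu]
      have he3 : S.Pm (x₀ + ξ) = ξ := by
        rw [hPm_eq, hPx₀ξ]
        abel
      simp only [he2, he3]
      exact hξ f
  have hliminf1 := hI2 _ _ hTC
  have hccφ : Tendsto (fun n => c (φ n)) atTop (𝓝 (S.I u₀)) :=
    hcconv.comp (hφmono.tendsto_atTop)
  have hIle' : ∀ᶠ n in atTop, S.I (u (φ n)) ≤ c (φ n) :=
    Filter.Eventually.of_forall fun n => hIle _
  have hliminf2 : Filter.liminf (fun n => S.I (u (φ n))) atTop ≤ S.I u₀ := by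
    have h1 : Filter.liminf (fun n => S.I (u (φ n))) atTop ≤
        Filter.liminf (fun n => c (φ n)) atTop := by
      have hbb : Filter.IsBoundedUnder (· ≥ ·) Filter.atTop (fun n => S.I (u (φ n))) :=
        Filter.isBoundedUnder_of ⟨0, fun n => hI0 (φ n)⟩
      exact Filter.liminf_le_liminf hIle' hbb hccφ.isBoundedUnder_le.isCoboundedUnder_ge
    rwa [hccφ.liminf_eq] at h1
  have hIxle : S.I (x₀ + ξ) ≤ S.I u₀ := le_trans hliminf1 hliminf2
  have hJge : S.J u₀ ≤ S.J (x₀ + ξ) := by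
    have h1 : S.J (x₀ + ξ) = 1/2 * ‖x₀‖^2 - S.I (x₀ + ξ) := by
      simp only [J, hPx₀ξ]
    rw [h1, hJu₀]
    linarith
  have heq : x₀ + ξ = u₀ := by
    by_contra hne
    have := (hm x₀ hx₀).2.2 ξ hξm hne
    rw [← hu₀] at this
    linarith
  rw [heq] at hTC hliminf1
  have hItend : Tendsto (fun n => S.I (u (φ n))) atTop (𝓝 (S.I u₀)) := by
    refine tendsto_of_le_liminf_of_limsup_le hliminf1 ?_ ?_ ?_
    · have h1 : Filter.limsup (fun n => S.I (u (φ n))) atTop ≤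
          Filter.limsup (fun n => c (φ n)) atTop := by
        have hbb : Filter.IsBoundedUnder (· ≥ ·) Filter.atTop (fun n => S.I (u (φ n))) :=
          Filter.isBoundedUnder_of ⟨0, fun n => hI0 (φ n)⟩
        exact Filter.limsup_le_limsup hIle' hbb.isCoboundedUnder_le hccφ.isBoundedUnder_le
      rwa [hccφ.limsup_eq] at h1
    · exact hccφ.isBoundedUnder_le.mono_le hIle'
    · exact (Filter.isBoundedUnder_of ⟨0, fun n => hI0 (φ n)⟩ :
        Filter.IsBoundedUnder (· ≥ ·) Filter.atTop (fun n => S.I (u (φ n))))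
  have := hI3 _ _ hTC hItend
  exact ⟨φ, hφmono, this⟩

end Setting
namespace Setting

variable {X : Type*} [NormedAddCommGroup X] [NormedSpace ℝ X] (S : Setting X) {m : X → X}

lemma m_tendsto (hm : S.IsMaxMap m) (hI1 : S.I1) (hI2 : S.I2) (hI3 : S.I3) (hI4 : S.I4)
    (w : ↥S.Xp) :
    Filter.Tendsto (fun h : ↥S.Xp => m (↑w + ↑h)) (𝓝 0) (𝓝 (m ↑w)) := by
  apply tendsto_of_subseq_tendsto
  intro ns hns
  have hxm : ∀ n, (↑w + ↑(ns n) : X) ∈ S.Xp := fun n => S.Xp.add_mem w.2 (ns n).2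
  have hconv : Tendsto (fun n => (↑w + ↑(ns n) : X)) atTop (𝓝 ↑w) := by
    have h1 : Tendsto (fun n => (↑(ns n) : X)) atTop (𝓝 (0:X)) := by
      have := (continuous_subtype_val.tendsto (0 : ↥S.Xp)).comp hns
      simpa [Function.comp_def] using this
    have h2 := (tendsto_const_nhds (x := (↑w : X)) (f := atTop)).add h1
    simpa using h2
  obtain ⟨ms, hmsmono, hms⟩ := S.m_subseq hm hI1 hI2 hI3 hI4 _ hxm w.2 hconv
  exact ⟨ms, hms⟩

lemma hasFDerivAt_Jt (hm : S.IsMaxMap m) (hI1 : S.I1) (hI2 : S.I2) (hI3 : S.I3) (hI4 : S.I4)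
    (w : ↥S.Xp) :
    HasFDerivAt (S.Jt m) ((S.Jd (m ↑w)).comp S.Xp.subtypeL) w := by
  set u₀ : X := m ↑w with hu₀
  set v₀ : X := u₀ - ↑w with hv₀
  have hv₀m : v₀ ∈ S.Xm := (hm ↑w w.2).2.1
  set D := (S.Jd u₀).comp S.Xp.subtypeL with hDdef
  rw [hasFDerivAt_iff_isLittleO_nhds_zero]
  have hwv : (↑w + v₀ : X) = u₀ := by rw [hv₀]; abel
  have hψ : HasFDerivAt (fun z : ↥S.Xp => S.J (↑z + v₀)) D w := by
    have h1 : HasFDerivAt (fun z : ↥S.Xp => (↑z + v₀ : X)) (S.Xp.subtypeL : ↥S.Xp →L[ℝ] X) w :=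
      (S.Xp.subtypeL.hasFDerivAt).add_const v₀
    have h2 : HasFDerivAt S.J (S.Jd u₀) ((fun z : ↥S.Xp => (↑z + v₀ : X)) w) := by
      simp only []
      rw [hwv]
      exact S.hasFDerivAt_J u₀
    exact h2.comp w h1
  have hψo := hasFDerivAt_iff_isLittleO_nhds_zero.mp hψ
  rw [Asymptotics.isLittleO_iff]
  intro ε hε
  have hψo' := Asymptotics.isLittleO_iff.mp hψo (half_pos hε)
  obtain ⟨δ, hδpos, hδ⟩ := Metric.continuousAt_iff.mp S.Jd_cont.continuousAt (ε/2) (half_pos hε)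
  have hmcont := S.m_tendsto hm hI1 hI2 hI3 hI4 w
  have hev1 : ∀ᶠ h : ↥S.Xp in 𝓝 0, dist (m (↑w + ↑h)) u₀ < δ/2 :=
    Metric.tendsto_nhds.mp hmcont (δ/2) (by positivity)
  have hev2 : ∀ᶠ h : ↥S.Xp in 𝓝 0, ‖h‖ < δ/2 := by
    filter_upwards [Metric.ball_mem_nhds (0 : ↥S.Xp) (show (0:ℝ) < δ/2 by positivity)] with h hh
    exact mem_ball_zero_iff.mp hh
  filter_upwards [hψo', hev1, hev2] with h h1 h2 h3
  set uh : X := m (↑w + ↑h) with huh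
  have hwh_mem : (↑w + ↑h : X) ∈ S.Xp := S.Xp.add_mem w.2 h.2
  have hcoe : ((w + h : ↥S.Xp) : X) = ↑w + ↑h := rfl
  have hJt1 : S.Jt m (w + h) = S.J uh := by
    simp only [Jt, hcoe, huh]
  have hJt0 : S.Jt m w = S.J u₀ := rfl
  -- lower bound
  have hlow : S.J (↑w + ↑h + v₀) ≤ S.J uh := by
    have := S.maxmap_J_le hm hwh_mem hv₀m
    exact this
  -- upper bound
  have hzmem : uh - (↑w + ↑h) ∈ S.Xm := (hm _ hwh_mem).2.1
  have hupp : S.J (uh - ↑h) ≤ S.J u₀ := by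
    have h9 := S.maxmap_J_le hm w.2 hzmem
    have he : (↑w + (uh - (↑w + ↑h)) : X) = uh - ↑h := by abel
    rw [he] at h9
    exact h9
  -- MVT estimate
  have hball : ∀ p ∈ Metric.ball u₀ δ, ‖S.Jd p - S.Jd u₀‖ ≤ ε/2 := by
    intro p hp
    have := hδ (show dist p u₀ < δ from Metric.mem_ball.mp hp)
    rw [dist_eq_norm] at this
    exact this.le
  have hmem1 : uh ∈ Metric.ball u₀ δ := by
    rw [Metric.mem_ball]
    linarith [h2]
  have hmem2 : uh - ↑h ∈ Metric.ball u₀ δ := by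
    rw [Metric.mem_ball]
    have ht : dist (uh - ↑h) u₀ ≤ dist (uh - ↑h) uh + dist uh u₀ := dist_triangle _ _ _
    have hd : dist (uh - (↑h:X)) uh = ‖h‖ := by
      rw [dist_eq_norm]
      simp
    rw [hd] at ht
    linarith
  have hmvt := (convex_ball u₀ δ).norm_image_sub_le_of_norm_hasFDerivWithin_le'
    (fun p hp => (S.hasFDerivAt_J p).hasFDerivWithinAt) hball hmem2 hmem1
  have hsub : uh - (uh - (↑h:X)) = ↑h := by abel
  rw [hsub] at hmvt
  have hDh : (S.Jd u₀) (↑h : X) = D h := rfl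
  have hnormh : ‖(↑h : X)‖ = ‖h‖ := rfl
  rw [hDh, hnormh] at hmvt
  -- combine
  have hE1 : |S.J (↑w + ↑h + v₀) - S.J (↑w + v₀) - D h| ≤ ε/2 * ‖h‖ := by
    have := h1
    simp only [Real.norm_eq_abs] at this
    convert this using 3
    rfl
  have hE2 : |S.J uh - S.J (uh - ↑h) - D h| ≤ ε/2 * ‖h‖ := by
    simpa [Real.norm_eq_abs] using hmvt
  have hEl : S.J (↑w + ↑h + v₀) - S.J (↑w + v₀) - D h ≤
      S.Jt m (w + h) - S.Jt m w - D h := by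
    rw [hJt1, hJt0, hwv]
    linarith [hlow]
  have hEu : S.Jt m (w + h) - S.Jt m w - D h ≤ S.J uh - S.J (uh - ↑h) - D h := by
    rw [hJt1, hJt0]
    linarith [hupp]
  rw [Real.norm_eq_abs]
  rw [abs_le] at hE1 hE2 ⊢
  have hn : (0:ℝ) ≤ ‖h‖ := norm_nonneg _
  constructor
  · linarith [hE1.1, hEl]
  · linarith [hE2.2, hEu]

end Setting
/-- Under (I1)–(I8): for every `u ∈ N`, `J(u) ≥ J((r/‖u⁺‖)·u⁺) ≥ a`; in particular
`inf_N J ≥ a > 0` and every nonzero critical point `w` of `𝒥̃` satisfies `𝒥̃(w) ≥ a`. -/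
theorem statement7
    {X : Type*} [NormedAddCommGroup X] [NormedSpace ℝ X]
    (S : Setting X)
    (hI1 : S.I1) (hI2 : S.I2) (hI3 : S.I3) (hI4 : S.I4) (hI5 : S.I5)
    (m : X → X) (hm : S.IsMaxMap m)
    (r a : ℝ) (hI6 : S.I6 r a) (Q : Submodule ℝ X) (hI7 : S.I7 m Q) (hI8 : S.I8) :
    (∀ u ∈ S.N, S.J ((r / ‖S.P u‖) • S.P u) ≤ S.J u ∧ a ≤ S.J ((r / ‖S.P u‖) • S.P u)) ∧
      (∀ u ∈ S.N, a ≤ S.J u) ∧ 0 < a ∧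
      ∀ w : ↥S.Xp, fderiv ℝ (S.Jt m) w = 0 → w ≠ 0 → a ≤ S.Jt m w := by
  have hpart1 : ∀ u ∈ S.N,
      S.J ((r / ‖S.P u‖) • S.P u) ≤ S.J u ∧ a ≤ S.J ((r / ‖S.P u‖) • S.P u) :=
    fun u hu => S.part_one hI8 hI6 hu
  have hpart2 : ∀ u ∈ S.N, a ≤ S.J u :=
    fun u hu => le_trans (hpart1 u hu).2 (hpart1 u hu).1
  refine ⟨hpart1, hpart2, hI6.2.2, ?_⟩
  intro w hcrit hw
  have hD := S.hasFDerivAt_Jt hm hI1 hI2 hI3 hI4 w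
  have hfd : (S.Jd (m ↑w)).comp S.Xp.subtypeL = 0 := by
    rw [← hD.fderiv]
    exact hcrit
  set u₀ : X := m ↑w with hu₀
  have hu₀M : u₀ ∈ S.M := (hm ↑w w.2).1
  have hJdXm : ∀ z ∈ S.Xm, S.Jd u₀ z = 0 := by
    intro z hz
    rw [S.Jd_apply_Xm _ hz, hu₀M z hz, neg_zero]
  have hNmem : u₀ ∈ S.N := by
    refine ⟨?_, ?_, ?_⟩
    · intro hmem
      have h0 : S.P u₀ = 0 := S.P_eq_zero_of_mem_Xm hmem
      rw [hu₀, S.maxmap_P hm w.2] at h0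
      exact hw (Submodule.coe_eq_zero.mp h0)
    · rw [S.fderiv_J]
      have hsplit : S.Jd u₀ u₀ = S.Jd u₀ ↑w + S.Jd u₀ (u₀ - ↑w) := by
        rw [← map_add]
        congr 1
        abel
      rw [hsplit, hJdXm _ (hm ↑w w.2).2.1]
      have hw0 : S.Jd u₀ ↑w = ((S.Jd u₀).comp S.Xp.subtypeL) w := rfl
      rw [hw0, hfd]
      simp
    · intro v hv
      rw [S.fderiv_J]
      exact hJdXm v hv
  exact hpart2 u₀ hNmem
end
end
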